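/- arXiv:2508.05500 — 10 statements merged into one kernel-verified Lean document; each statement's English description precedes it below -/
import Mathlib

section
/- Let n and t be natural numbers with 3 ≤ t ≤ n and n ≥ 7. Then λ₁(M_{n,t}) is the largest real root of the polynomial g_{n,t}(x) = x³ − (n−3)x² − (n+t−3)x − t² + (n+4)t − n − 7; in particular g_{n,t}(λ₁(M_{n,t})) = 0 and every real root of g_{n,t} is at most λ₁(M_{n,t}). -/
/-
Split the vertices into the classes {u}, {v₁}, S = {v₂, …, v_{t−1}} and T = {v_t, …, v_{n−1}}.
The sign of an edge depends only on the classes of its ends, so M_{n,t} = A∘π − I for a 4 × 4 sign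
pattern A and the class map π. Hence every eigenvalue μ ≠ −1 of M_{n,t} gives the nonzero
eigenvalue μ + 1 of the blow-up A∘π, whose nonzero eigenvalues are those of the quotient
diag(1, 1, t − 2, n − t)·A, and det(diag(1, 1, t − 2, n − t)·A − (x + 1)I) = (x + 1) g_{n,t}(x).
Since g_{n,t}(n − 3) < 0 < g_{n,t}(2n), some root of g_{n,t} exceeds −1, so the largest eigenvalue
is not −1 and is the largest root of g_{n,t}.
-/

open Matrix

/-- The largest eigenvalue of a real matrix (for symmetric matrices this is λ₁). -/
noncomputable def lam1 {n : ℕ} (A : Matrix (Fin n) (Fin n) ℝ) : ℝ :=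
  sSup {μ : ℝ | ∃ v : Fin n → ℝ, v ≠ 0 ∧ A.mulVec v = μ • v}

/-- `A` is the adjacency matrix of a signed graph: symmetric, zero diagonal,
entries in {-1,0,1}. -/
def IsSignedAdj {n : ℕ} (A : Matrix (Fin n) (Fin n) ℝ) : Prop :=
  A.IsSymm ∧ (∀ i, A i i = 0) ∧ ∀ i j, A i j = -1 ∨ A i j = 0 ∨ A i j = 1

/-- A signed graph is balanced if a global sign switching makes all edges positive. -/
def IsBalanced {n : ℕ} (A : Matrix (Fin n) (Fin n) ℝ) : Prop :=
  ∃ s : Fin n → ℝ, (∀ i, s i = -1 ∨ s i = 1) ∧ ∀ i j, 0 ≤ s i * A i j * s j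

/-- Every fully present copy of K_{3,3} is balanced. -/
def K33Free {n : ℕ} (A : Matrix (Fin n) (Fin n) ℝ) : Prop :=
  ∀ a₁ a₂ a₃ b₁ b₂ b₃ : Fin n,
    [a₁, a₂, a₃, b₁, b₂, b₃].Nodup →
    (∀ a ∈ [a₁, a₂, a₃], ∀ b ∈ [b₁, b₂, b₃], A a b ≠ 0) →
    ∀ a ∈ [a₁, a₂, a₃], ∀ a' ∈ [a₁, a₂, a₃], ∀ b ∈ [b₁, b₂, b₃], ∀ b' ∈ [b₁, b₂, b₃],
      A a b * A a b' * A a' b * A a' b' = 1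

/-- Switching isomorphism of signed adjacency matrices. -/
def SwitchIso {n : ℕ} (A B : Matrix (Fin n) (Fin n) ℝ) : Prop :=
  ∃ σ : Equiv.Perm (Fin n), ∃ s : Fin n → ℝ, (∀ i, s i = -1 ∨ s i = 1) ∧
    ∀ i j, B i j = s i * s j * A (σ i) (σ j)

/-- Adjacency matrix of Γ_{n,t}: vertex 0 is u, vertices 1,…,n-1 form an
all-positive K_{n-1}; u is adjacent to 1,…,t-1, with u1 the unique negative edge. -/
noncomputable def Mnt (n t : ℕ) : Matrix (Fin n) (Fin n) ℝ :=
  Matrix.of fun i j =>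
    if i = j then 0
    else if (i : ℕ) = 0 then (if (j : ℕ) = 1 then -1 else if (j : ℕ) < t then 1 else 0)
    else if (j : ℕ) = 0 then (if (i : ℕ) = 1 then -1 else if (i : ℕ) < t then 1 else 0)
    else 1

open Finset

def fiberSum {ι κ K : Type*} [Fintype ι] [DecidableEq κ] [AddCommMonoid K] (π : ι → κ)
    (v : ι → K) (k : κ) : K :=
  ∑ i with π i = k, v i

namespace Matrix

variable {ι κ R K : Type*} [Fintype ι] [DecidableEq κ]

theorem submatrix_mulVec_eq_comp [Fintype κ] [Semiring R] (A : Matrix κ κ R) (π : ι → κ)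
    (v : ι → R) :
    A.submatrix π π *ᵥ v = (A *ᵥ fiberSum π v) ∘ π := by
  ext i
  simp only [mulVec, dotProduct, submatrix_apply, fiberSum, Function.comp_apply, mul_sum]
  rw [← sum_fiberwise univ π]
  refine sum_congr rfl fun k _ => sum_congr rfl fun j hj => ?_
  rw [(mem_filter.mp hj).2]

theorem fiberSum_comp [Semiring R] (π : ι → κ) (f : κ → R) :
    fiberSum π (f ∘ π) = fun k => (#{i | π i = k} : R) * f k := by
  ext k
  simp only [fiberSum, Function.comp_apply]
  rw [sum_congr rfl fun i hi => by rw [(mem_filter.mp hi).2], sum_const, nsmul_eq_mul]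

/-- `fiberSum π` and lifting along `π` intertwine the blow-up `A.submatrix π π` with the
quotient `diagonal (fiber sizes) * A`; as for `XY` and `YX`, this matches nonzero eigenvalues. -/
theorem exists_submatrix_mulVec_eq_smul_iff [Fintype κ] [Field K] (A : Matrix κ κ K) (π : ι → κ)
    {s : K} (hs : s ≠ 0) :
    (∃ v ≠ 0, A.submatrix π π *ᵥ v = s • v) ↔
      ∃ u ≠ 0, (diagonal (fun k => (#{i | π i = k} : K)) * A) *ᵥ u = s • u := by
  have hquot : ∀ u, (diagonal (fun k => (#{i | π i = k} : K)) * A) *ᵥ u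
      = fiberSum π ((A *ᵥ u) ∘ π) := by
    intro u
    ext k
    rw [fiberSum_comp, ← mulVec_mulVec, mulVec_diagonal]
  constructor
  · rintro ⟨v, hv, hAv⟩
    rw [submatrix_mulVec_eq_comp] at hAv
    refine ⟨fiberSum π v, fun h0 => hv ?_, ?_⟩
    · rw [h0, mulVec_zero] at hAv
      exact (smul_eq_zero.mp hAv.symm).resolve_left hs
    · rw [hquot, hAv]
      ext k
      simp [fiberSum, mul_sum]
  · rintro ⟨u, hu, hDAu⟩
    have hsum : fiberSum π ((A *ᵥ u) ∘ π) = s • u := by rw [← hquot, hDAu]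
    refine ⟨(A *ᵥ u) ∘ π, fun h0 => hu ?_, ?_⟩
    · have hzero : fiberSum π (0 : ι → K) = 0 := by ext k; simp [fiberSum]
      rw [h0, hzero] at hsum
      exact (smul_eq_zero.mp hsum.symm).resolve_left hs
    · rw [submatrix_mulVec_eq_comp, hsum, mulVec_smul]
      rfl

theorem exists_mulVec_eq_smul_iff_det_eq_zero [Fintype κ] [Field K] (B : Matrix κ κ K) (s : K) :
    (∃ u ≠ 0, B *ᵥ u = s • u) ↔ (B - s • 1).det = 0 := by
  rw [← exists_mulVec_eq_zero_iff]
  simp only [sub_mulVec, smul_mulVec, one_mulVec, sub_eq_zero]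

theorem finite_setOf_exists_mulVec_eq_smul [Fintype κ] [Field K] (B : Matrix κ κ K) :
    {μ : K | ∃ u ≠ 0, B *ᵥ u = μ • u}.Finite := by
  refine (Module.End.finite_hasEigenvalue (toLin' B)).subset fun μ ⟨u, hu, hBu⟩ => ?_
  exact Module.End.hasEigenvalue_of_hasEigenvector
    (Module.End.hasEigenvector_iff.mpr
      ⟨Module.End.mem_eigenspace_iff.mpr (by simpa using hBu), hu⟩)

end Matrix

theorem Fin.card_filter_univ_val (n : ℕ) (P : ℕ → Prop) [DecidablePred P] :
    #{i : Fin n | P i} = #{m ∈ range n | P m} := by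
  rw [card_filter, card_filter, Fin.sum_univ_eq_sum_range (fun m => if P m then 1 else 0)]

noncomputable def gnt (n t : ℕ) (x : ℝ) : ℝ :=
  x ^ 3 - ((n : ℝ) - 3) * x ^ 2 - ((n : ℝ) + (t : ℝ) - 3) * x
    - (t : ℝ) ^ 2 + ((n : ℝ) + 4) * (t : ℝ) - (n : ℝ) - 7

theorem exists_gnt_root_ge {n t : ℕ} (htn : t ≤ n) (hn : 7 ≤ n) :
    ∃ r : ℝ, (n : ℝ) - 3 ≤ r ∧ gnt n t r = 0 := by
  have hn' : (7 : ℝ) ≤ n := by exact_mod_cast hn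
  have htn' : (t : ℝ) ≤ n := by exact_mod_cast htn
  have ht : (0 : ℝ) ≤ t := t.cast_nonneg
  have hcont : ContinuousOn (gnt n t) (Set.Icc ((n : ℝ) - 3) (2 * n)) := by
    unfold gnt
    fun_prop
  have hlow : gnt n t ((n : ℝ) - 3) ≤ 0 := by
    unfold gnt
    nlinarith [sq_nonneg ((t : ℝ) - 7 / 2)]
  have hhigh : 0 ≤ gnt n t (2 * n) := by
    unfold gnt
    nlinarith [mul_le_mul htn' htn' ht (by linarith : (0 : ℝ) ≤ n),
      pow_pos (by linarith : (0 : ℝ) < n) 3]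
  obtain ⟨r, hr, hgr⟩ := intermediate_value_Icc (by linarith) hcont ⟨hlow, hhigh⟩
  exact ⟨r, hr.1, hgr⟩

namespace Mnt

/-- Vertex `m` of `Γ_{n,t}` lies in class `0` (`u`), `1` (`v₁`), `2` (`v₂, …, v_{t-1}`)
or `3` (`v_t, …, v_{n-1}`). -/
def vertexClass (t m : ℕ) : Fin 4 :=
  if m = 0 then 0 else if m = 1 then 1 else if m < t then 2 else 3

/-- The sign of the edge between distinct vertices of two classes; the diagonal entries of the
singleton classes are arbitrary and chosen as `1` so that `Mnt n t` is the blow-up minus `1`. -/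
def classAdj : Matrix (Fin 4) (Fin 4) ℝ :=
  !![1, -1, 1, 0; -1, 1, 1, 1; 1, 1, 1, 1; 0, 1, 1, 1]

theorem eq_submatrix_sub_one (n t : ℕ) :
    Mnt n t = classAdj.submatrix (vertexClass t ∘ Fin.val) (vertexClass t ∘ Fin.val) - 1 := by
  ext i j
  simp only [Mnt, classAdj, vertexClass, of_apply, submatrix_apply, Matrix.sub_apply, one_apply,
    Fin.ext_iff, Function.comp_apply]
  split_ifs <;> first | omega | simp

theorem card_vertexClass {n t : ℕ} (h2 : 2 ≤ t) (htn : t ≤ n) (k : Fin 4) :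
    (#{i : Fin n | (vertexClass t ∘ Fin.val) i = k} : ℝ)
      = ![1, 1, (t : ℝ) - 2, (n : ℝ) - t] k := by
  have hclasses : {m ∈ range n | vertexClass t m = k} = ![{0}, {1}, Ico 2 t, Ico t n] k := by
    ext m
    rw [mem_filter, mem_range]
    fin_cases k <;> simp only [vertexClass] <;> split_ifs <;> simp <;> omega
  simp only [Function.comp_apply]
  rw [Fin.card_filter_univ_val n (vertexClass t · = k), hclasses]
  fin_cases k <;> simp [Nat.cast_sub h2, Nat.cast_sub htn]

theorem det_quotient_sub_smul_one (n t : ℕ) (x : ℝ) :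
    (diagonal ![1, 1, (t : ℝ) - 2, (n : ℝ) - t] * classAdj - (x + 1) • 1).det
      = (x + 1) * gnt n t x := by
  rw [det_succ_row_zero]
  simp [classAdj, gnt, Fin.sum_univ_succ, det_fin_three, submatrix, one_apply,
    (by decide : Fin.succAbove (1 : Fin 4) (2 : Fin 3) = 3),
    (by decide : Fin.succAbove (2 : Fin 4) (2 : Fin 3) = 3)]
  ring

theorem exists_mulVec_eq_smul_iff {n t : ℕ} (h2 : 2 ≤ t) (htn : t ≤ n) {μ : ℝ} (hμ : μ ≠ -1) :
    (∃ v ≠ 0, Mnt n t *ᵥ v = μ • v) ↔ gnt n t μ = 0 := by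
  have hs : μ + 1 ≠ 0 := fun h => hμ (eq_neg_of_add_eq_zero_left h)
  calc (∃ v ≠ 0, Mnt n t *ᵥ v = μ • v)
      ↔ ∃ v : Fin n → ℝ, v ≠ 0 ∧
          classAdj.submatrix (vertexClass t ∘ Fin.val) (vertexClass t ∘ Fin.val) *ᵥ v
            = (μ + 1) • v := by
        simp only [eq_submatrix_sub_one, sub_mulVec, one_mulVec, sub_eq_iff_eq_add, add_smul,
          one_smul]
    _ ↔ ∃ u ≠ 0, (diagonal ![1, 1, (t : ℝ) - 2, (n : ℝ) - t] * classAdj) *ᵥ u = (μ + 1) • u := by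
        rw [exists_submatrix_mulVec_eq_smul_iff _ _ hs, funext (card_vertexClass h2 htn)]
    _ ↔ gnt n t μ = 0 := by
        rw [exists_mulVec_eq_smul_iff_det_eq_zero, det_quotient_sub_smul_one, mul_eq_zero,
          or_iff_right hs]

end Mnt

theorem lam1_Mnt_largest_root (n t : ℕ) (h3 : 3 ≤ t) (htn : t ≤ n) (hn : 7 ≤ n) :
    (lam1 (Mnt n t)) ^ 3 - ((n : ℝ) - 3) * (lam1 (Mnt n t)) ^ 2
      - ((n : ℝ) + (t : ℝ) - 3) * (lam1 (Mnt n t))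
      - (t : ℝ) ^ 2 + ((n : ℝ) + 4) * (t : ℝ) - (n : ℝ) - 7 = 0 ∧
    ∀ x : ℝ,
      x ^ 3 - ((n : ℝ) - 3) * x ^ 2 - ((n : ℝ) + (t : ℝ) - 3) * x
        - (t : ℝ) ^ 2 + ((n : ℝ) + 4) * (t : ℝ) - (n : ℝ) - 7 = 0 →
      x ≤ lam1 (Mnt n t) := by
  have hmem : ∀ {μ : ℝ}, μ ≠ -1 → ((∃ v ≠ 0, Mnt n t *ᵥ v = μ • v) ↔ gnt n t μ = 0) :=
    Mnt.exists_mulVec_eq_smul_iff (by omega) htn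
  have hfin := finite_setOf_exists_mulVec_eq_smul (Mnt n t)
  have hn' : (7 : ℝ) ≤ n := by exact_mod_cast hn
  obtain ⟨r, hr, hgr⟩ := exists_gnt_root_ge htn hn
  have hrE : ∃ v ≠ 0, Mnt n t *ᵥ v = r • v := (hmem (by linarith)).2 hgr
  have hrle : r ≤ lam1 (Mnt n t) := le_csSup hfin.bddAbove hrE
  refine ⟨(hmem (by linarith)).1 (Set.Nonempty.csSup_mem ⟨r, hrE⟩ hfin), fun x hx => ?_⟩
  by_cases hx1 : x = -1
  · linarith
  · exact le_csSup hfin.bddAbove ((hmem hx1).2 hx)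
end

section
/- For every natural number n ≥ 7, λ₁(A_U) < n − 2. -/
open Matrix

/-- Adjacency matrix of the signed graph U (vertices v₁,…,vₙ are indices 0,…,n-1):
v₁v₂ negative; v₁,v₂ each positively joined to v₃,v₄,v₅; v₃,…,vₙ an all-positive K_{n-2}. -/
noncomputable def AU (n : ℕ) : Matrix (Fin n) (Fin n) ℝ :=
  Matrix.of fun i j =>
    if i = j then 0
    else if ((i : ℕ) = 0 ∧ (j : ℕ) = 1) ∨ ((i : ℕ) = 1 ∧ (j : ℕ) = 0) then -1
    else if 2 ≤ (i : ℕ) ∧ 2 ≤ (j : ℕ) then 1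
    else if ((i : ℕ) ≤ 1 ∧ 2 ≤ (j : ℕ) ∧ (j : ℕ) ≤ 4) ∨
            ((j : ℕ) ≤ 1 ∧ 2 ≤ (i : ℕ) ∧ (i : ℕ) ≤ 4) then 1
    else 0

/-- Adjacency matrix of Z₁: v₁v₂ negative; v₁ positive to v₃,v₄,v₅; v₂ positive to
v₃,v₄,v₆; v₃,…,vₙ an all-positive K_{n-2} minus the edge v₅v₆. -/
noncomputable def AZ1 (n : ℕ) : Matrix (Fin n) (Fin n) ℝ :=
  Matrix.of fun i j =>
    if i = j then 0
    else if ((i : ℕ) = 0 ∧ (j : ℕ) = 1) ∨ ((i : ℕ) = 1 ∧ (j : ℕ) = 0) then -1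
    else if 2 ≤ (i : ℕ) ∧ 2 ≤ (j : ℕ) then
      (if ((i : ℕ) = 4 ∧ (j : ℕ) = 5) ∨ ((i : ℕ) = 5 ∧ (j : ℕ) = 4) then 0 else 1)
    else if ((i : ℕ) = 0 ∧ ((j : ℕ) = 2 ∨ (j : ℕ) = 3 ∨ (j : ℕ) = 4)) ∨
            ((j : ℕ) = 0 ∧ ((i : ℕ) = 2 ∨ (i : ℕ) = 3 ∨ (i : ℕ) = 4)) ∨
            ((i : ℕ) = 1 ∧ ((j : ℕ) = 2 ∨ (j : ℕ) = 3 ∨ (j : ℕ) = 5)) ∨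
            ((j : ℕ) = 1 ∧ ((i : ℕ) = 2 ∨ (i : ℕ) = 3 ∨ (i : ℕ) = 5)) then 1
    else 0

/-- Adjacency matrix of Z₂: v₁v₂ negative; v₁ positive to v₃,v₄,v₅; v₂ positive to
v₃,v₄,v₆; v₃,…,vₙ an all-positive K_{n-2} minus the edges v₄v₅ and v₄v₆. -/
noncomputable def AZ2 (n : ℕ) : Matrix (Fin n) (Fin n) ℝ :=
  Matrix.of fun i j =>
    if i = j then 0
    else if ((i : ℕ) = 0 ∧ (j : ℕ) = 1) ∨ ((i : ℕ) = 1 ∧ (j : ℕ) = 0) then -1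
    else if 2 ≤ (i : ℕ) ∧ 2 ≤ (j : ℕ) then
      (if ((i : ℕ) = 3 ∧ ((j : ℕ) = 4 ∨ (j : ℕ) = 5)) ∨
          ((j : ℕ) = 3 ∧ ((i : ℕ) = 4 ∨ (i : ℕ) = 5)) then 0 else 1)
    else if ((i : ℕ) = 0 ∧ ((j : ℕ) = 2 ∨ (j : ℕ) = 3 ∨ (j : ℕ) = 4)) ∨
            ((j : ℕ) = 0 ∧ ((i : ℕ) = 2 ∨ (i : ℕ) = 3 ∨ (i : ℕ) = 4)) ∨
            ((i : ℕ) = 1 ∧ ((j : ℕ) = 2 ∨ (j : ℕ) = 3 ∨ (j : ℕ) = 5)) ∨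
            ((j : ℕ) = 1 ∧ ((i : ℕ) = 2 ∨ (i : ℕ) = 3 ∨ (i : ℕ) = 5)) then 1
    else 0

/-- Adjacency matrix of W: v₁v₂ negative; v₁,v₃,v₅,v₆,…,vₙ an all-positive K_{n-2};
v₂ positive to v₃,v₄; v₄ positive to v₁,v₃,v₅. -/
noncomputable def AW (n : ℕ) : Matrix (Fin n) (Fin n) ℝ :=
  Matrix.of fun i j =>
    if i = j then 0
    else if ((i : ℕ) = 0 ∧ (j : ℕ) = 1) ∨ ((i : ℕ) = 1 ∧ (j : ℕ) = 0) then -1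
    else if (i : ℕ) ≠ 1 ∧ (i : ℕ) ≠ 3 ∧ (j : ℕ) ≠ 1 ∧ (j : ℕ) ≠ 3 then 1
    else if ((i : ℕ) = 1 ∧ ((j : ℕ) = 2 ∨ (j : ℕ) = 3)) ∨
            ((j : ℕ) = 1 ∧ ((i : ℕ) = 2 ∨ (i : ℕ) = 3)) ∨
            ((i : ℕ) = 3 ∧ ((j : ℕ) = 0 ∨ (j : ℕ) = 2 ∨ (j : ℕ) = 4)) ∨
            ((j : ℕ) = 3 ∧ ((i : ℕ) = 0 ∨ (i : ℕ) = 2 ∨ (i : ℕ) = 4)) then 1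
    else 0



/-!
For `x : Fin n → ℝ` the deficit `(n - 2)‖x‖² - xᵀ A_U x` is the sum of squares
`(n - 7)(x₁² + x₂²) + 2(x₁ - x₂)² + ∑_{k=3}^{5} (x_k - x₁ - x₂)² + ∑_{k≥6} x_k²
  + ½ ∑_{i,j≥3} (x_i - x_j)²`,
the last term being Lagrange's identity for the clique `v₃,…,vₙ`. It vanishes only at `x = 0`:
the last two terms force `x_k = 0` for `k ≥ 3`, then the third gives `x₁ + x₂ = 0` and the second
`x₁ = x₂`. Hence the Rayleigh quotient of `A_U`, and so each of its eigenvalues, is below `n - 2`.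
-/

theorem Matrix.finite_setOf_eigenvalue {K ι : Type*} [Field K] [Fintype ι] [DecidableEq ι]
    (A : Matrix ι ι K) : {μ : K | ∃ v : ι → K, v ≠ 0 ∧ A *ᵥ v = μ • v}.Finite :=
  (Module.End.finite_hasEigenvalue (toLin' A)).subset fun _ ⟨_, hv, hAv⟩ =>
    Module.End.hasEigenvalue_of_hasEigenvector ⟨Module.End.mem_eigenspace_iff.2 hAv, hv⟩

-- With no real eigenvalue, `lam1 A = sSup ∅ = 0`.
theorem lam1_lt_of_dotProduct_mulVec_lt {n : ℕ} {A : Matrix (Fin n) (Fin n) ℝ} {b : ℝ}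
    (hb : 0 < b) (hA : ∀ v ≠ 0, v ⬝ᵥ (A *ᵥ v) < b * (v ⬝ᵥ v)) : lam1 A < b := by
  have eigenvalue_lt : ∀ μ ∈ {μ : ℝ | ∃ v, v ≠ 0 ∧ A *ᵥ v = μ • v}, μ < b := by
    rintro μ ⟨v, hv, hAv⟩
    have hvv : 0 < v ⬝ᵥ v := by simpa using dotProduct_self_star_pos_iff.2 hv
    have := hA v hv
    rw [hAv, dotProduct_smul, smul_eq_mul] at this
    exact lt_of_mul_lt_mul_right this hvv.le
  rcases Set.eq_empty_or_nonempty {μ : ℝ | ∃ v, v ≠ 0 ∧ A *ᵥ v = μ • v} with h | h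
  · rwa [lam1, h, Real.sSup_empty]
  · exact eigenvalue_lt _ (h.csSup_mem A.finite_setOf_eigenvalue)

theorem dotProduct_vecMulVec_mulVec {ι R : Type*} [Fintype ι] [CommSemiring R] (a b v : ι → R) :
    v ⬝ᵥ (vecMulVec a b *ᵥ v) = (v ⬝ᵥ a) * (b ⬝ᵥ v) := by
  rw [vecMulVec_mulVec, dotProduct_smul, op_smul_eq_mul]

theorem dotProduct_diagonal_mulVec {ι R : Type*} [Fintype ι] [DecidableEq ι] [CommSemiring R]
    (a v : ι → R) : v ⬝ᵥ (diagonal a *ᵥ v) = ∑ i, a i * v i ^ 2 := by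
  simp only [dotProduct, mulVec_diagonal]
  exact Finset.sum_congr rfl fun _ _ => by ring

section WeightedSums

variable {ι R : Type*} [Fintype ι]

theorem sum_mul_sub_sq [CommRing R] (w x : ι → R) (c : R) :
    ∑ i, w i * (x i - c) ^ 2 = ∑ i, w i * x i ^ 2 - 2 * c * ∑ i, w i * x i + c ^ 2 * ∑ i, w i := by
  simp only [Finset.mul_sum, ← Finset.sum_sub_distrib, ← Finset.sum_add_distrib]
  exact Finset.sum_congr rfl fun _ _ => by ring

theorem sum_sum_mul_mul_sub_sq [CommRing R] (w v : ι → R) :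
    ∑ i, ∑ j, w i * w j * (v i - v j) ^ 2
      = 2 * ((∑ i, w i) * ∑ i, w i * v i ^ 2 - (∑ i, w i * v i) ^ 2) := by
  have hleft : ∑ i, ∑ j, w i * w j * v i ^ 2 = (∑ i, w i) * ∑ i, w i * v i ^ 2 := by
    rw [Finset.sum_mul_sum, Finset.sum_comm]
    exact Finset.sum_congr rfl fun _ _ => Finset.sum_congr rfl fun _ _ => by ring
  have hright : ∑ i, ∑ j, w i * w j * v j ^ 2 = (∑ i, w i) * ∑ i, w i * v i ^ 2 := by
    rw [Finset.sum_mul_sum]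
    exact Finset.sum_congr rfl fun _ _ => Finset.sum_congr rfl fun _ _ => by ring
  have hcross : ∑ i, ∑ j, w i * w j * (v i * v j) = (∑ i, w i * v i) ^ 2 := by
    rw [sq, Finset.sum_mul_sum]
    exact Finset.sum_congr rfl fun _ _ => Finset.sum_congr rfl fun _ _ => by ring
  calc ∑ i, ∑ j, w i * w j * (v i - v j) ^ 2
      = ∑ i, ∑ j, (w i * w j * v i ^ 2 + w i * w j * v j ^ 2 - 2 * (w i * w j * (v i * v j))) :=
        Finset.sum_congr rfl fun _ _ => Finset.sum_congr rfl fun _ _ => by ring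
    _ = _ := by
        simp only [Finset.sum_add_distrib, Finset.sum_sub_distrib, ← Finset.mul_sum]
        rw [hleft, hright, hcross]
        ring

variable [CommRing R] [LinearOrder R] [IsStrictOrderedRing R] {w : ι → R}

theorem sum_mul_sq_nonneg (hw : 0 ≤ w) (x : ι → R) : 0 ≤ ∑ i, w i * x i ^ 2 :=
  Finset.sum_nonneg fun i _ => mul_nonneg (hw i) (sq_nonneg (x i))

theorem eq_zero_of_sum_mul_sq_eq_zero {x : ι → R} (hw : 0 ≤ w)
    (h : ∑ i, w i * x i ^ 2 = 0) {i : ι} (hi : w i ≠ 0) : x i = 0 := by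
  have := (Finset.sum_eq_zero_iff_of_nonneg fun j _ => mul_nonneg (hw j) (sq_nonneg (x j))).1 h i
    (Finset.mem_univ i)
  simpa [hi] using this

theorem sum_sum_mul_mul_sub_sq_nonneg (hw : 0 ≤ w) (v : ι → R) :
    0 ≤ ∑ i, ∑ j, w i * w j * (v i - v j) ^ 2 :=
  Finset.sum_nonneg fun i _ => sum_mul_sq_nonneg (fun j => mul_nonneg (hw i) (hw j)) _

theorem eq_of_sum_sum_mul_mul_sub_sq_eq_zero (hw : 0 ≤ w) {v : ι → R}
    (h : ∑ i, ∑ j, w i * w j * (v i - v j) ^ 2 = 0) {i j : ι} (hi : w i ≠ 0) (hj : w j ≠ 0) :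
    v i = v j := by
  have hrow := (Finset.sum_eq_zero_iff_of_nonneg fun i _ =>
    sum_mul_sq_nonneg (fun j => mul_nonneg (hw i) (hw j)) _).1 h i (Finset.mem_univ i)
  exact sub_eq_zero.1 (eq_zero_of_sum_mul_sq_eq_zero (x := fun j => v i - v j)
    (fun j => mul_nonneg (hw i) (hw j)) hrow (mul_ne_zero hi hj))

end WeightedSums

namespace AU

/-- `seg n k` is the indicator of `{v₁,…,v_k}`: `seg n 2` marks the ends of the negative edge,
`1 - seg n 2` the clique, `seg n 5 - seg n 2` the common neighbours `v₃, v₄, v₅` and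
`1 - seg n 5` the rest of the clique. -/
def seg (n k : ℕ) : Fin n → ℝ := fun i => if (i : ℕ) < k then 1 else 0

theorem seg_of_lt {n k : ℕ} {i : Fin n} (h : (i : ℕ) < k) : seg n k i = 1 := if_pos h

theorem seg_of_le {n k : ℕ} {i : Fin n} (h : k ≤ (i : ℕ)) : seg n k i = 0 := if_neg h.not_gt

theorem sum_seg {n k : ℕ} (hk : k ≤ n) : ∑ i, seg n k i = k := by
  simp [seg, Finset.sum_boole, Fin.card_filter_val_lt, hk]

theorem seg_nonneg (n k : ℕ) : 0 ≤ seg n k := fun i => by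
  unfold seg; split_ifs <;> norm_num

theorem one_sub_seg_nonneg (n k : ℕ) : 0 ≤ 1 - seg n k := fun i => by
  simp only [seg, Pi.sub_apply, Pi.one_apply, Pi.zero_apply]; split_ifs <;> norm_num

theorem seg_sub_seg_nonneg (n : ℕ) {k l : ℕ} (hkl : k ≤ l) : 0 ≤ seg n l - seg n k := fun i => by
  simp only [seg, Pi.sub_apply, Pi.zero_apply]; split_ifs <;> first | omega | norm_num

-- `vecMulVec a a - diagonal a` is the adjacency matrix of the complete graph on the support of `a`.
theorem eq_vecMulVec (n : ℕ) :
    AU n = (vecMulVec (1 - seg n 2) (1 - seg n 2) - diagonal (1 - seg n 2))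
      + (vecMulVec (seg n 2) (seg n 5 - seg n 2) + vecMulVec (seg n 5 - seg n 2) (seg n 2))
      - (vecMulVec (seg n 2) (seg n 2) - diagonal (seg n 2)) := by
  ext i j
  simp only [AU, seg, of_apply, Matrix.add_apply, Matrix.sub_apply, vecMulVec_apply, diagonal_apply,
    Pi.sub_apply, Pi.one_apply, Fin.ext_iff]
  split_ifs <;> first | omega | norm_num

theorem dotProduct_mulVec_eq (n : ℕ) (v : Fin n → ℝ) :
    v ⬝ᵥ (AU n *ᵥ v) = ((1 - seg n 2) ⬝ᵥ v) ^ 2 - ∑ i, (1 - seg n 2) i * v i ^ 2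
      + 2 * (seg n 2 ⬝ᵥ v) * ((seg n 5 - seg n 2) ⬝ᵥ v)
      - ((seg n 2 ⬝ᵥ v) ^ 2 - ∑ i, seg n 2 i * v i ^ 2) := by
  rw [eq_vecMulVec]
  simp only [add_mulVec, sub_mulVec, dotProduct_add, dotProduct_sub, dotProduct_vecMulVec_mulVec,
    dotProduct_diagonal_mulVec]
  simp only [dotProduct_comm v, sub_dotProduct]
  ring

theorem sub_dotProduct_mulVec_eq {n : ℕ} (hn : 5 ≤ n) (v : Fin n → ℝ) :
    ((n : ℝ) - 2) * (v ⬝ᵥ v) - v ⬝ᵥ (AU n *ᵥ v)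
      = ((n : ℝ) - 7) * ∑ i, seg n 2 i * v i ^ 2
        + ∑ i, ∑ j, seg n 2 i * seg n 2 j * (v i - v j) ^ 2
        + ∑ i, (seg n 5 - seg n 2) i * (v i - seg n 2 ⬝ᵥ v) ^ 2
        + ∑ i, (1 - seg n 5) i * v i ^ 2
        + (∑ i, ∑ j, (1 - seg n 2) i * (1 - seg n 2) j * (v i - v j) ^ 2) / 2 := by
  rw [dotProduct_mulVec_eq, sum_sum_mul_mul_sub_sq, sum_sum_mul_mul_sub_sq]
  simp only [Pi.sub_apply, Pi.one_apply, sub_mul, one_mul, Finset.sum_sub_distrib, sum_mul_sub_sq,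
    dotProduct, mul_sub, sum_seg (show 2 ≤ n by omega), sum_seg hn, ← sq, Finset.sum_const,
    Finset.card_univ, Fintype.card_fin, nsmul_eq_mul, mul_one, Nat.cast_ofNat]
  ring

theorem eq_zero_of_sub_dotProduct_mulVec_nonpos {n : ℕ} (hn : 7 ≤ n) {v : Fin n → ℝ}
    (h : ((n : ℝ) - 2) * (v ⬝ᵥ v) - v ⬝ᵥ (AU n *ᵥ v) ≤ 0) : v = 0 := by
  rw [sub_dotProduct_mulVec_eq (by omega)] at h
  set p := seg n 2 ⬝ᵥ v
  have hn7 : (0 : ℝ) ≤ n - 7 := by rw [sub_nonneg]; exact_mod_cast hn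
  have scaled_hub_nonneg := mul_nonneg hn7 (sum_mul_sq_nonneg (seg_nonneg n 2) v)
  have hub_nonneg := sum_sum_mul_mul_sub_sq_nonneg (seg_nonneg n 2) v
  have link_nonneg := sum_mul_sq_nonneg (seg_sub_seg_nonneg n (show 2 ≤ 5 by norm_num)) (fun i => v i - p)
  have tail_nonneg := sum_mul_sq_nonneg (one_sub_seg_nonneg n 5) v
  have clique_nonneg := sum_sum_mul_mul_sub_sq_nonneg (one_sub_seg_nonneg n 2) v
  have hub_eq_zero : ∑ i, ∑ j, seg n 2 i * seg n 2 j * (v i - v j) ^ 2 = 0 := by linarith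
  have link_eq_zero : ∑ i, (seg n 5 - seg n 2) i * (v i - p) ^ 2 = 0 := by linarith
  have tail_eq_zero : ∑ i, (1 - seg n 5) i * v i ^ 2 = 0 := by linarith
  have clique_eq_zero : ∑ i, ∑ j, (1 - seg n 2) i * (1 - seg n 2) j * (v i - v j) ^ 2 = 0 := by linarith
  have tail_zero (i : Fin n) (hi : 5 ≤ (i : ℕ)) : v i = 0 :=
    eq_zero_of_sum_mul_sq_eq_zero (one_sub_seg_nonneg n 5) tail_eq_zero (by simp [seg_of_le hi])
  have clique_zero (i : Fin n) (hi : 2 ≤ (i : ℕ)) : v i = 0 :=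
    (eq_of_sum_sum_mul_mul_sub_sq_eq_zero (one_sub_seg_nonneg n 2) clique_eq_zero
      (i := i) (j := ⟨5, by omega⟩) (by simp [seg_of_le hi]) (by simp [seg_of_le])).trans
      (tail_zero _ le_rfl)
  have hp : p = 0 := by
    have := eq_zero_of_sum_mul_sq_eq_zero (x := fun i => v i - p)
      (seg_sub_seg_nonneg n (show 2 ≤ 5 by norm_num)) link_eq_zero (i := ⟨2, by omega⟩)
      (by simp [seg_of_le, seg_of_lt])
    simp only [clique_zero ⟨2, by omega⟩ le_rfl] at this
    linarith
  have hub_eq (i : Fin n) (hi : (i : ℕ) < 2) : v i = v ⟨0, by omega⟩ :=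
    eq_of_sum_sum_mul_mul_sub_sq_eq_zero (seg_nonneg n 2) hub_eq_zero (by simp [seg_of_lt hi])
      (by simp [seg_of_lt])
  have hv0 : v ⟨0, by omega⟩ = 0 := by
    have hp' : p = ∑ i, seg n 2 i * v ⟨0, by omega⟩ := Finset.sum_congr rfl fun i _ => by
      rcases lt_or_ge (i : ℕ) 2 with hi | hi
      · rw [hub_eq i hi]
      · simp [seg_of_le hi]
    rw [← Finset.sum_mul, sum_seg (by omega), hp] at hp'
    push_cast at hp'
    linarith
  funext i
  rcases lt_or_ge (i : ℕ) 2 with hi | hi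
  · exact (hub_eq i hi).trans hv0
  · exact clique_zero i hi

theorem dotProduct_mulVec_lt {n : ℕ} (hn : 7 ≤ n) {v : Fin n → ℝ} (hv : v ≠ 0) :
    v ⬝ᵥ (AU n *ᵥ v) < ((n : ℝ) - 2) * (v ⬝ᵥ v) := by
  by_contra h
  exact hv (eq_zero_of_sub_dotProduct_mulVec_nonpos hn (by linarith))

end AU

theorem lam1_AU_lt (n : ℕ) (hn : 7 ≤ n) : lam1 (AU n) < (n : ℝ) - 2 := by
  have hn7 : (7 : ℝ) ≤ n := by exact_mod_cast hn
  exact lam1_lt_of_dotProduct_mulVec_lt (by linarith) fun _ hv => AU.dotProduct_mulVec_lt hn hv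
end

section
/- For every natural number n ≥ 7, λ₁(A_{Z₁}) < n − 2. -/
open Matrix

/-!
An eigenvalue `μ` with eigenvector `v` satisfies `μ |v|² = vᵀ A v`, so it suffices to show
`xᵀ A x ≤ (n - 5/2) |x|²` for all `x`. Write
`n = 6 + k` and split `x` into its part `a` on `v₁, …, v₆` and its part `y` on the clique
`v₇, …, vₙ`. The form depends on `y` only through `T = ∑ yⱼ` and `R = ∑ yⱼ²`, and `T² ≤ k R` by
Cauchy–Schwarz. With `t = T / k`, the bound is the case `n = 7` evaluated at `(a, t)` (an explicit
sum of squares) plus `k - 1` copies of `2 (a₂ + a₃ + a₄ + a₅) t ≤ |a|² + 4 t²`.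
-/

theorem lam1_le_of_dotProduct_mulVec_le {n : ℕ} {A : Matrix (Fin n) (Fin n) ℝ} {c : ℝ}
    (hc : 0 ≤ c) (hA : ∀ x, x ⬝ᵥ A *ᵥ x ≤ c * (x ⬝ᵥ x)) : lam1 A ≤ c := by
  refine Real.sSup_le ?_ hc
  rintro μ ⟨v, hv0, hv⟩
  have hpos : 0 < v ⬝ᵥ v := by simpa using dotProduct_self_star_pos_iff.mpr hv0
  have hμ := hA v
  rw [hv, dotProduct_smul, smul_eq_mul] at hμ
  exact le_of_mul_le_mul_right hμ hpos

theorem AZ1_castAdd_castAdd (k : ℕ) (i j : Fin 6) :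
    AZ1 (6 + k) (Fin.castAdd k i) (Fin.castAdd k j) = AZ1 6 i j := by
  simp only [AZ1, Matrix.of_apply, Fin.ext_iff, Fin.val_castAdd]

theorem AZ1_castAdd_natAdd (k : ℕ) (i : Fin 6) (j : Fin k) :
    AZ1 (6 + k) (Fin.castAdd k i) (Fin.natAdd 6 j) = if 2 ≤ (i : ℕ) then 1 else 0 := by
  simp only [AZ1, Matrix.of_apply, Fin.ext_iff, Fin.val_castAdd, Fin.val_natAdd]
  have := i.isLt
  split_ifs <;> first | rfl | (exfalso; omega)

theorem AZ1_natAdd_castAdd (k : ℕ) (i : Fin k) (j : Fin 6) :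
    AZ1 (6 + k) (Fin.natAdd 6 i) (Fin.castAdd k j) = if 2 ≤ (j : ℕ) then 1 else 0 := by
  simp only [AZ1, Matrix.of_apply, Fin.ext_iff, Fin.val_castAdd, Fin.val_natAdd]
  have := j.isLt
  split_ifs <;> first | rfl | (exfalso; omega)

theorem AZ1_natAdd_natAdd (k : ℕ) (i j : Fin k) :
    AZ1 (6 + k) (Fin.natAdd 6 i) (Fin.natAdd 6 j) = if i = j then 0 else 1 := by
  simp only [AZ1, Matrix.of_apply, Fin.ext_iff, Fin.val_natAdd]
  split_ifs <;> first | rfl | (exfalso; omega)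

theorem append_dotProduct_append {R : Type*} [Mul R] [AddCommMonoid R] {m k : ℕ}
    (a b : Fin m → R) (y z : Fin k → R) :
    Fin.append a y ⬝ᵥ Fin.append b z = a ⬝ᵥ b + y ⬝ᵥ z := by
  simp only [dotProduct, Fin.sum_univ_add, Fin.append_left, Fin.append_right]

theorem AZ1_mulVec_append_castAdd {k : ℕ} (a : Fin 6 → ℝ) (y : Fin k → ℝ) (i : Fin 6) :
    (AZ1 (6 + k) *ᵥ Fin.append a y) (Fin.castAdd k i) =
      (AZ1 6 *ᵥ a) i + if 2 ≤ (i : ℕ) then ∑ j, y j else 0 := by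
  simp [mulVec, dotProduct, Fin.sum_univ_add, AZ1_castAdd_castAdd, AZ1_castAdd_natAdd, ite_mul,
    Finset.sum_ite_irrel]

theorem AZ1_mulVec_append_natAdd {k : ℕ} (a : Fin 6 → ℝ) (y : Fin k → ℝ) (i : Fin k) :
    (AZ1 (6 + k) *ᵥ Fin.append a y) (Fin.natAdd 6 i) =
      a 2 + a 3 + a 4 + a 5 + (∑ j, y j - y i) := by
  simp only [mulVec, dotProduct, Fin.sum_univ_add, Fin.append_left, Fin.append_right,
    AZ1_natAdd_castAdd, AZ1_natAdd_natAdd, Fin.sum_univ_six]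
  simp [Finset.sum_ite, Finset.filter_ne]

theorem append_dotProduct_AZ1_mulVec_append {k : ℕ} (a : Fin 6 → ℝ) (y : Fin k → ℝ) :
    Fin.append a y ⬝ᵥ AZ1 (6 + k) *ᵥ Fin.append a y =
      a ⬝ᵥ AZ1 6 *ᵥ a + 2 * (a 2 + a 3 + a 4 + a 5) * ∑ j, y j + (∑ j, y j) ^ 2 -
        y ⬝ᵥ y := by
  rw [dotProduct, Fin.sum_univ_add]
  simp only [Fin.append_left, Fin.append_right, AZ1_mulVec_append_castAdd,
    AZ1_mulVec_append_natAdd]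
  simp [mul_add, mul_sub, Finset.sum_add_distrib, Finset.sum_sub_distrib, dotProduct,
    Fin.sum_univ_six, ← Finset.sum_mul, sq]
  ring

theorem dotProduct_AZ1_seven_mulVec_le (x : Fin 7 → ℝ) :
    x ⬝ᵥ AZ1 7 *ᵥ x ≤ 9 / 2 * (x ⬝ᵥ x) := by
  -- The swap v₁ ↔ v₂, v₅ ↔ v₆ is an automorphism of Z₁. On symmetric vectors the form
  -- (9/2)|x|² - xᵀAx, in the variables x₀+x₁, x₂+x₃, x₄+x₅, x₆, has nonpositive off-diagonal
  -- entries and becomes diagonally dominant after scaling by (6, 12, 9, 10): the first eight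
  -- squares are that certificate, the last four control the antisymmetric part.
  simp [dotProduct, mulVec, Fin.sum_univ_succ, AZ1]
  nlinarith [sq_nonneg (2 * (x 0 + x 1) - (x 2 + x 3)),
    sq_nonneg (3 * (x 0 + x 1) - 2 * (x 4 + x 5)), sq_nonneg (3 * (x 2 + x 3) - 4 * (x 4 + x 5)),
    sq_nonneg (5 * (x 2 + x 3) - 12 * x 6), sq_nonneg (5 * (x 4 + x 5) - 9 * x 6),
    sq_nonneg (x 2 + x 3), sq_nonneg (x 4 + x 5), sq_nonneg (x 6),
    sq_nonneg (x 0 - x 1 - x 4 + x 5), sq_nonneg (x 0 - x 1), sq_nonneg (x 4 - x 5),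
    sq_nonneg (x 2 - x 3)]

theorem dotProduct_AZ1_mulVec_le {k : ℕ} (hk : 1 ≤ k) (x : Fin (6 + k) → ℝ) :
    x ⬝ᵥ AZ1 (6 + k) *ᵥ x ≤ (k + 7 / 2) * (x ⬝ᵥ x) := by
  obtain ⟨a, y, rfl⟩ : ∃ a y, x = Fin.append a y := ⟨_, _, Fin.append_castAdd_natAdd.symm⟩
  set t : ℝ := (∑ j, y j) / k
  have hk1 : (1 : ℝ) ≤ k := by exact_mod_cast hk
  have hT : ∑ j, y j = k * t := by
    simp only [t]
    field_simp
  have hR : k * t ^ 2 ≤ y ⬝ᵥ y := by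
    have hCS : (∑ j, y j) ^ 2 ≤ k * (y ⬝ᵥ y) := by
      simpa [dotProduct, sq] using sq_sum_le_card_mul_sum_sq (s := Finset.univ) (f := y)
    rw [hT] at hCS
    exact le_of_mul_le_mul_left (by linarith) (by positivity : (0 : ℝ) < k)
  have hbase : Fin.append a ![t] ⬝ᵥ AZ1 (6 + 1) *ᵥ Fin.append a ![t] ≤
      9 / 2 * (Fin.append a ![t] ⬝ᵥ Fin.append a ![t]) :=
    dotProduct_AZ1_seven_mulVec_le _
  rw [append_dotProduct_AZ1_mulVec_append, append_dotProduct_append] at hbase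
  simp only [Fin.sum_univ_one, Matrix.cons_val_fin_one, Matrix.cons_dotProduct_cons,
    Matrix.dotProduct_of_isEmpty, add_zero] at hbase
  have hσ : 2 * (a 2 + a 3 + a 4 + a 5) * t ≤ a ⬝ᵥ a + 4 * t ^ 2 := by
    simp only [dotProduct, Fin.sum_univ_six]
    nlinarith [sq_nonneg (a 2 - t), sq_nonneg (a 3 - t), sq_nonneg (a 4 - t), sq_nonneg (a 5 - t),
      sq_nonneg (a 0), sq_nonneg (a 1)]
  rw [append_dotProduct_AZ1_mulVec_append, append_dotProduct_append, hT]
  linarith [mul_le_mul_of_nonneg_left hσ (sub_nonneg.2 hk1),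
    mul_le_mul_of_nonneg_left hR (by positivity),
    mul_nonneg (sub_nonneg.2 hk1) (sq_nonneg t)]

theorem lam1_AZ1_lt (n : ℕ) (hn : 7 ≤ n) : lam1 (AZ1 n) < (n : ℝ) - 2 := by
  obtain ⟨k, hk, rfl⟩ : ∃ k, 1 ≤ k ∧ n = 6 + k := ⟨n - 6, by omega, by omega⟩
  have h := lam1_le_of_dotProduct_mulVec_le (by positivity) (dotProduct_AZ1_mulVec_le hk)
  push_cast
  linarith
end

section
/- For every natural number n ≥ 7, λ₁(A_{Z₂}) < n − 2. -/
open Matrix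

/-!
Brauer's theorem places every eigenvalue `μ` of a matrix with zero diagonal in an oval
`|μ|² ≤ rₚ r_q` with `p ≠ q`, where `rᵢ` is the sum of the absolute values of row `i`. For a signed
graph `rᵢ` is the degree of `vᵢ`. In `Z₂` the vertex `v₃` has degree `n - 1`, but every other vertex
misses at least two vertices besides itself, hence has degree at most `n - 3`. So
`μ² ≤ (n - 1)(n - 3) = (n - 2)² - 1 < (n - 2)²`.
-/

open Finset

namespace Matrix

variable {ι 𝕜 : Type*} [Fintype ι] [DecidableEq ι] [NormedField 𝕜]

theorem norm_sub_diag_mul_le_of_mulVec_eq_smul {A : Matrix ι ι 𝕜} {v : ι → 𝕜} {μ : 𝕜}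
    (h : A *ᵥ v = μ • v) (i : ι) {W : ℝ} (hW : ∀ j ≠ i, ‖v j‖ ≤ W) :
    ‖μ - A i i‖ * ‖v i‖ ≤ (∑ j ∈ univ.erase i, ‖A i j‖) * W := by
  have hrow : (μ - A i i) * v i = ∑ j ∈ univ.erase i, A i j * v j := by
    have := congrFun h i
    simp only [mulVec, dotProduct, Pi.smul_apply, smul_eq_mul] at this
    rw [← add_sum_erase _ _ (mem_univ i)] at this
    rw [sub_mul, ← this]
    ring
  rw [← norm_mul, hrow, sum_mul]
  refine (norm_sum_le _ _).trans (sum_le_sum fun j hj => ?_)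
  rw [norm_mul]
  exact mul_le_mul_of_nonneg_left (hW j (ne_of_mem_erase hj)) (norm_nonneg _)

/-- **Brauer's ovals of Cassini**, a two-row refinement of Gershgorin's circle theorem. -/
theorem exists_ne_norm_sub_diag_mul_le_of_mulVec_eq_smul [Nontrivial ι] {A : Matrix ι ι 𝕜}
    {v : ι → 𝕜} {μ : 𝕜} (hv : v ≠ 0) (h : A *ᵥ v = μ • v) :
    ∃ p q, p ≠ q ∧ ‖μ - A p p‖ * ‖μ - A q q‖ ≤
      (∑ j ∈ univ.erase p, ‖A p j‖) * ∑ j ∈ univ.erase q, ‖A q j‖ := by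
  obtain ⟨p, -, hp⟩ := exists_max_image univ (fun j => ‖v j‖) univ_nonempty
  obtain ⟨q, hq_mem, hq⟩ := exists_max_image (univ.erase p) (fun j => ‖v j‖)
    (let ⟨j, hj⟩ := exists_ne p; ⟨j, mem_erase.2 ⟨hj, mem_univ j⟩⟩)
  have hqp := ne_of_mem_erase hq_mem
  refine ⟨p, q, hqp.symm, ?_⟩
  have hvp : 0 < ‖v p‖ := by
    obtain ⟨j, hj⟩ := Function.ne_iff.1 hv
    exact (norm_pos_iff.2 hj).trans_le (hp j (mem_univ j))
  have hRp := sum_nonneg fun j (_ : j ∈ univ.erase p) => norm_nonneg (A p j)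
  have hRq := sum_nonneg fun j (_ : j ∈ univ.erase q) => norm_nonneg (A q j)
  have hmp := norm_sub_diag_mul_le_of_mulVec_eq_smul h p
    fun j hj => hq j (mem_erase.2 ⟨hj, mem_univ j⟩)
  have hmq := norm_sub_diag_mul_le_of_mulVec_eq_smul h q fun j _ => hp j (mem_univ j)
  rcases (norm_nonneg (v q)).eq_or_lt with hvq | hvq
  · rw [← hvq, mul_zero] at hmp
    have : ‖μ - A p p‖ = 0 := by nlinarith [norm_nonneg (μ - A p p)]
    rw [this, zero_mul]
    positivity
  · refine le_of_mul_le_mul_right ?_ (mul_pos hvp hvq)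
    calc ‖μ - A p p‖ * ‖μ - A q q‖ * (‖v p‖ * ‖v q‖)
        = (‖μ - A p p‖ * ‖v p‖) * (‖μ - A q q‖ * ‖v q‖) := by ring
      _ ≤ ((∑ j ∈ univ.erase p, ‖A p j‖) * ‖v q‖) * ((∑ j ∈ univ.erase q, ‖A q j‖) * ‖v p‖) :=
        mul_le_mul hmp hmq (by positivity) (by positivity)
      _ = _ := by ring

end Matrix

theorem Finset.sum_abs_le_card_sdiff {ι : Type*} [DecidableEq ι] {s t : Finset ι} {f : ι → ℝ}
    (h_le : ∀ j ∈ s, |f j| ≤ 1) (h_zero : ∀ j ∈ t, f j = 0) : ∑ j ∈ s, |f j| ≤ #(s \ t) := by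
  rw [← sum_subset sdiff_subset fun j hjs hj => by
    rw [h_zero j (by simpa [hjs] using hj), abs_zero]]
  simpa using sum_le_card_nsmul (s \ t) _ 1 fun j hj => h_le j (mem_sdiff.1 hj).1

lemma AZ2_apply_self {n : ℕ} (i : Fin n) : AZ2 n i i = 0 := by
  simp [AZ2]

lemma abs_AZ2_le_one {n : ℕ} (i j : Fin n) : |AZ2 n i j| ≤ 1 := by
  simp only [AZ2, of_apply]
  split_ifs <;> norm_num

lemma sum_abs_AZ2_le {n : ℕ} (i : Fin n) : ∑ j ∈ univ.erase i, |AZ2 n i j| ≤ (n : ℝ) - 1 := by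
  have := sum_abs_le_card_sdiff (s := univ.erase i) (t := ∅) (fun j _ => abs_AZ2_le_one i j)
    (by simp)
  rwa [sdiff_empty, card_erase_of_mem (mem_univ i), card_univ, Fintype.card_fin,
    Nat.cast_pred (Fin.pos i)] at this

lemma AZ2_eq_zero_of_nonadj {n : ℕ} {i : Fin n} {j : ℕ} (hj : j < n)
    (h : (i : ℕ) = 0 ∧ (j = 5 ∨ j = 6) ∨ (i : ℕ) = 1 ∧ (j = 4 ∨ j = 6) ∨
      (i : ℕ) = 3 ∧ (j = 4 ∨ j = 5) ∨ (i : ℕ) = 4 ∧ (j = 1 ∨ j = 3) ∨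
      (i : ℕ) = 5 ∧ (j = 0 ∨ j = 3) ∨ 6 ≤ (i : ℕ) ∧ j ≤ 1) :
    AZ2 n i ⟨j, hj⟩ = 0 := by
  simp only [AZ2, of_apply, Fin.ext_iff]
  split_ifs <;> first | rfl | omega

lemma exists_pair_AZ2_eq_zero {n : ℕ} (hn : 7 ≤ n) (i : Fin n) (hi : (i : ℕ) ≠ 2) :
    ∃ t ⊆ univ.erase i, #t = 2 ∧ ∀ j ∈ t, AZ2 n i j = 0 := by
  have of_pair (a b : ℕ) (h : a < n ∧ b < n ∧ a ≠ b ∧ a ≠ i ∧ b ≠ i)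
      (hza : AZ2 n i ⟨a, h.1⟩ = 0) (hzb : AZ2 n i ⟨b, h.2.1⟩ = 0) :
      ∃ t ⊆ univ.erase i, #t = 2 ∧ ∀ j ∈ t, AZ2 n i j = 0 :=
    ⟨{⟨a, h.1⟩, ⟨b, h.2.1⟩}, by simp [insert_subset_iff, Fin.ext_iff, h.2.2.2],
      card_pair (by simpa [Fin.ext_iff] using h.2.2.1), by simp [hza, hzb]⟩
  obtain hi | hi | hi | hi | hi | hi :
      (i : ℕ) = 0 ∨ (i : ℕ) = 1 ∨ (i : ℕ) = 3 ∨ (i : ℕ) = 4 ∨ (i : ℕ) = 5 ∨ 6 ≤ (i : ℕ) := by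
    omega
  all_goals first
    | exact of_pair 5 6 (by omega) (AZ2_eq_zero_of_nonadj _ (by omega))
        (AZ2_eq_zero_of_nonadj _ (by omega))
    | exact of_pair 4 6 (by omega) (AZ2_eq_zero_of_nonadj _ (by omega))
        (AZ2_eq_zero_of_nonadj _ (by omega))
    | exact of_pair 4 5 (by omega) (AZ2_eq_zero_of_nonadj _ (by omega))
        (AZ2_eq_zero_of_nonadj _ (by omega))
    | exact of_pair 1 3 (by omega) (AZ2_eq_zero_of_nonadj _ (by omega))
        (AZ2_eq_zero_of_nonadj _ (by omega))
    | exact of_pair 0 3 (by omega) (AZ2_eq_zero_of_nonadj _ (by omega))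
        (AZ2_eq_zero_of_nonadj _ (by omega))
    | exact of_pair 0 1 (by omega) (AZ2_eq_zero_of_nonadj _ (by omega))
        (AZ2_eq_zero_of_nonadj _ (by omega))

lemma sum_abs_AZ2_le_of_ne {n : ℕ} (hn : 7 ≤ n) (i : Fin n) (hi : (i : ℕ) ≠ 2) :
    ∑ j ∈ univ.erase i, |AZ2 n i j| ≤ (n : ℝ) - 3 := by
  obtain ⟨t, hts, htc, ht⟩ := exists_pair_AZ2_eq_zero hn i hi
  have := sum_abs_le_card_sdiff (s := univ.erase i) (fun j _ => abs_AZ2_le_one i j) ht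
  rw [card_sdiff_of_subset hts, card_erase_of_mem (mem_univ i), card_univ, Fintype.card_fin,
    htc, Nat.cast_sub (by omega), Nat.cast_pred (by omega), Nat.cast_two] at this
  linarith

lemma sum_abs_AZ2_mul_le {n : ℕ} (hn : 7 ≤ n) {p q : Fin n} (hpq : p ≠ q) :
    (∑ j ∈ univ.erase p, |AZ2 n p j|) * ∑ j ∈ univ.erase q, |AZ2 n q j| ≤
      ((n : ℝ) - 1) * ((n : ℝ) - 3) := by
  have hn' : (7 : ℝ) ≤ n := by exact_mod_cast hn
  have hR (i : Fin n) : 0 ≤ ∑ j ∈ univ.erase i, |AZ2 n i j| := sum_nonneg fun j _ => abs_nonneg _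
  by_cases hp : (p : ℕ) = 2
  · have hq : (q : ℕ) ≠ 2 := fun hq => hpq (Fin.ext (hp.trans hq.symm))
    exact mul_le_mul (sum_abs_AZ2_le p) (sum_abs_AZ2_le_of_ne hn q hq) (hR q) (by linarith)
  · rw [mul_comm ((n : ℝ) - 1)]
    exact mul_le_mul (sum_abs_AZ2_le_of_ne hn p hp) (sum_abs_AZ2_le q) (hR q) (by linarith)

theorem lam1_AZ2_lt (n : ℕ) (hn : 7 ≤ n) : lam1 (AZ2 n) < (n : ℝ) - 2 := by
  have hn' : (7 : ℝ) ≤ n := by exact_mod_cast hn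
  have : Nontrivial (Fin n) := Fin.nontrivial_iff_two_le.2 (by omega)
  refine (Real.sSup_le ?_ (Real.sqrt_nonneg _)).trans_lt
    ((Real.sqrt_lt' (by linarith)).2 (by nlinarith) : √(((n : ℝ) - 1) * ((n : ℝ) - 3)) < _)
  rintro μ ⟨v, hv, hμ⟩
  obtain ⟨p, q, hpq, hcassini⟩ := exists_ne_norm_sub_diag_mul_le_of_mulVec_eq_smul hv hμ
  simp only [AZ2_apply_self, sub_zero, Real.norm_eq_abs] at hcassini
  refine (le_abs_self μ).trans (Real.abs_le_sqrt ?_)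
  rw [sq, ← abs_mul_abs_self]
  exact hcassini.trans (sum_abs_AZ2_mul_le hn hpq)
end

section
/- For every natural number n ≥ 7, λ₁(A_W) < n − 2. -/
open Matrix

-- off-row value lemma
lemma AW_far (n : ℕ) (i j : Fin n) (hij : i ≠ j) (h5 : 5 ≤ (i : ℕ) ∨ 5 ≤ (j : ℕ)) :
    AW n i j = if (i : ℕ) ≠ 1 ∧ (i : ℕ) ≠ 3 ∧ (j : ℕ) ≠ 1 ∧ (j : ℕ) ≠ 3 then 1 else 0 := by
  have hv : (i : ℕ) ≠ (j : ℕ) := fun h => hij (Fin.ext h)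
  simp only [AW, Matrix.of_apply, if_neg hij]
  split_ifs <;> first | rfl | omega

lemma AW_g_zero (n : ℕ) (v : Fin n → ℝ) (i j : Fin n)
    (h : ¬((i : ℕ) < 5 ∧ (j : ℕ) < 5)) :
    v i * (AW n i j * v j)
      - (if (i : ℕ) = 1 ∨ (i : ℕ) = 3 then 0 else v i)
        * (if (j : ℕ) = 1 ∨ (j : ℕ) = 3 then 0 else v j)
      + (if j = i then
          (if (i : ℕ) = 1 ∨ (i : ℕ) = 3 then 0 else v i)
            * (if (i : ℕ) = 1 ∨ (i : ℕ) = 3 then 0 else v i) else 0) = 0 := by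
  by_cases hij : i = j
  · subst hij
    have : AW n i i = 0 := by simp [AW]
    rw [this]
    simp
  · rw [if_neg (Ne.symm hij)]
    have h5 : 5 ≤ (i : ℕ) ∨ 5 ≤ (j : ℕ) := by omega
    rw [AW_far n i j hij h5]
    by_cases h1 : (i : ℕ) = 1 ∨ (i : ℕ) = 3
    · rw [if_pos h1, if_neg (by omega : ¬((i : ℕ) ≠ 1 ∧ (i : ℕ) ≠ 3 ∧ (j : ℕ) ≠ 1 ∧ (j : ℕ) ≠ 3))]
      ring
    · by_cases h2 : (j : ℕ) = 1 ∨ (j : ℕ) = 3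
      · rw [if_pos h2, if_neg (by omega : ¬((i : ℕ) ≠ 1 ∧ (i : ℕ) ≠ 3 ∧ (j : ℕ) ≠ 1 ∧ (j : ℕ) ≠ 3))]
        ring
      · rw [if_neg h1, if_neg h2, if_pos (by omega : (i : ℕ) ≠ 1 ∧ (i : ℕ) ≠ 3 ∧ (j : ℕ) ≠ 1 ∧ (j : ℕ) ≠ 3)]
        ring

lemma AW_quad (n : ℕ) (v : Fin n → ℝ) (i0 i1 i2 i3 i4 : Fin n)
    (h0 : (i0 : ℕ) = 0) (h1 : (i1 : ℕ) = 1) (h2 : (i2 : ℕ) = 2)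
    (h3 : (i3 : ℕ) = 3) (h4 : (i4 : ℕ) = 4) :
    v ⬝ᵥ (AW n).mulVec v
      = (∑ i : Fin n, (if (i : ℕ) = 1 ∨ (i : ℕ) = 3 then 0 else v i)) ^ 2
        - (∑ i : Fin n, (if (i : ℕ) = 1 ∨ (i : ℕ) = 3 then 0 else v i)
            * (if (i : ℕ) = 1 ∨ (i : ℕ) = 3 then 0 else v i))
        + 2 * (-(v i0 * v i1) + v i0 * v i3 + v i1 * v i2 + v i1 * v i3
                + v i2 * v i3 + v i3 * v i4) := by
  set w : Fin n → ℝ := fun i => if (i : ℕ) = 1 ∨ (i : ℕ) = 3 then 0 else v i with hw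
  have ha : v ⬝ᵥ (AW n).mulVec v = ∑ i, ∑ j, v i * (AW n i j * v j) := by
    simp only [dotProduct, mulVec, Finset.mul_sum]
  have hb : (∑ i, w i) ^ 2 = ∑ i, ∑ j, w i * w j := by
    rw [sq, Finset.sum_mul_sum]
  have hc : (∑ i, w i * w i) = ∑ i, ∑ j, (if j = i then w i * w i else 0) := by
    refine Finset.sum_congr rfl fun i _ => ?_
    simp
  set F : Finset (Fin n) := {i0, i1, i2, i3, i4} with hF
  have hmemF : ∀ i : Fin n, i ∈ F ↔ (i : ℕ) < 5 := by
    intro i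
    simp only [hF, Finset.mem_insert, Finset.mem_singleton, Fin.ext_iff, h0, h1, h2, h3, h4]
    omega
  have hne01 : i0 ≠ i1 := by simp [Fin.ext_iff, h0, h1]
  have hne02 : i0 ≠ i2 := by simp [Fin.ext_iff, h0, h2]
  have hne03 : i0 ≠ i3 := by simp [Fin.ext_iff, h0, h3]
  have hne04 : i0 ≠ i4 := by simp [Fin.ext_iff, h0, h4]
  have hne12 : i1 ≠ i2 := by simp [Fin.ext_iff, h1, h2]
  have hne13 : i1 ≠ i3 := by simp [Fin.ext_iff, h1, h3]
  have hne14 : i1 ≠ i4 := by simp [Fin.ext_iff, h1, h4]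
  have hne23 : i2 ≠ i3 := by simp [Fin.ext_iff, h2, h3]
  have hne24 : i2 ≠ i4 := by simp [Fin.ext_iff, h2, h4]
  have hne34 : i3 ≠ i4 := by simp [Fin.ext_iff, h3, h4]
  have expand : ∀ g : Fin n → ℝ, ∑ j ∈ F, g j = g i0 + g i1 + g i2 + g i3 + g i4 := by
    intro g
    rw [hF]
    rw [Finset.sum_insert (by
          simp only [Finset.mem_insert, Finset.mem_singleton, not_or]
          exact ⟨hne01, hne02, hne03, hne04⟩),
        Finset.sum_insert (by
          simp only [Finset.mem_insert, Finset.mem_singleton, not_or]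
          exact ⟨hne12, hne13, hne14⟩),
        Finset.sum_insert (by
          simp only [Finset.mem_insert, Finset.mem_singleton, not_or]
          exact ⟨hne23, hne24⟩),
        Finset.sum_insert (by simp only [Finset.mem_singleton]; exact hne34),
        Finset.sum_singleton]
    ring
  have hg : (∑ i, ∑ j, (v i * (AW n i j * v j) - w i * w j
        + (if j = i then w i * w i else 0)))
      = 2 * (-(v i0 * v i1) + v i0 * v i3 + v i1 * v i2 + v i1 * v i3
              + v i2 * v i3 + v i3 * v i4) := by
    have houter : (∑ i, ∑ j, (v i * (AW n i j * v j) - w i * w j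
          + (if j = i then w i * w i else 0)))
        = ∑ i ∈ F, ∑ j, (v i * (AW n i j * v j) - w i * w j
          + (if j = i then w i * w i else 0)) := by
      refine (Finset.sum_subset (Finset.subset_univ F) fun i _ hiF => ?_).symm
      refine Finset.sum_eq_zero fun j _ => ?_
      have hnlt : ¬ ((i : ℕ) < 5 ∧ (j : ℕ) < 5) := by
        rw [hmemF] at hiF; omega
      simpa [hw] using AW_g_zero n v i j hnlt
    have hinner : ∀ i ∈ F, (∑ j, (v i * (AW n i j * v j) - w i * w j
          + (if j = i then w i * w i else 0)))
        = ∑ j ∈ F, (v i * (AW n i j * v j) - w i * w j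
          + (if j = i then w i * w i else 0)) := by
      intro i _
      refine (Finset.sum_subset (Finset.subset_univ F) fun j _ hjF => ?_).symm
      have hnlt : ¬ ((i : ℕ) < 5 ∧ (j : ℕ) < 5) := by
        rw [hmemF] at hjF; omega
      simpa [hw] using AW_g_zero n v i j hnlt
    rw [houter, Finset.sum_congr rfl hinner]
    simp only [expand]
    simp only [AW, Matrix.of_apply, hw, Fin.ext_iff, h0, h1, h2, h3, h4]
    norm_num
    ring
  calc v ⬝ᵥ (AW n).mulVec v
      = ∑ i, ∑ j, v i * (AW n i j * v j) := ha
    _ = (∑ i, ∑ j, (v i * (AW n i j * v j) - w i * w j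
          + (if j = i then w i * w i else 0)))
        + (∑ i, ∑ j, w i * w j) - (∑ i, ∑ j, (if j = i then w i * w i else 0)) := by
        rw [← Finset.sum_add_distrib, ← Finset.sum_sub_distrib]
        refine Finset.sum_congr rfl fun i _ => ?_
        rw [← Finset.sum_add_distrib, ← Finset.sum_sub_distrib]
        refine Finset.sum_congr rfl fun j _ => by ring
    _ = _ := by rw [hg, ← hb, ← hc]; ring

lemma sum_five (n : ℕ) (g : Fin n → ℝ) (i0 i1 i2 i3 i4 : Fin n)
    (h0 : (i0 : ℕ) = 0) (h1 : (i1 : ℕ) = 1) (h2 : (i2 : ℕ) = 2)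
    (h3 : (i3 : ℕ) = 3) (h4 : (i4 : ℕ) = 4) :
    ∑ i : Fin n, g i
      = g i0 + g i1 + g i2 + g i3 + g i4
        + ∑ i ∈ Finset.univ.filter (fun i : Fin n => ¬ (i : ℕ) < 5), g i := by
  have hne01 : i0 ≠ i1 := by simp [Fin.ext_iff, h0, h1]
  have hne02 : i0 ≠ i2 := by simp [Fin.ext_iff, h0, h2]
  have hne03 : i0 ≠ i3 := by simp [Fin.ext_iff, h0, h3]
  have hne04 : i0 ≠ i4 := by simp [Fin.ext_iff, h0, h4]
  have hne12 : i1 ≠ i2 := by simp [Fin.ext_iff, h1, h2]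
  have hne13 : i1 ≠ i3 := by simp [Fin.ext_iff, h1, h3]
  have hne14 : i1 ≠ i4 := by simp [Fin.ext_iff, h1, h4]
  have hne23 : i2 ≠ i3 := by simp [Fin.ext_iff, h2, h3]
  have hne24 : i2 ≠ i4 := by simp [Fin.ext_iff, h2, h4]
  have hne34 : i3 ≠ i4 := by simp [Fin.ext_iff, h3, h4]
  have hfilter : Finset.univ.filter (fun i : Fin n => (i : ℕ) < 5)
      = ({i0, i1, i2, i3, i4} : Finset (Fin n)) := by
    ext i
    simp only [Finset.mem_filter, Finset.mem_univ, true_and, Finset.mem_insert,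
      Finset.mem_singleton, Fin.ext_iff, h0, h1, h2, h3, h4]
    omega
  rw [← Finset.sum_filter_add_sum_filter_not Finset.univ (fun i : Fin n => (i : ℕ) < 5) g,
    hfilter]
  rw [Finset.sum_insert (by
        simp only [Finset.mem_insert, Finset.mem_singleton, not_or]
        exact ⟨hne01, hne02, hne03, hne04⟩),
      Finset.sum_insert (by
        simp only [Finset.mem_insert, Finset.mem_singleton, not_or]
        exact ⟨hne12, hne13, hne14⟩),
      Finset.sum_insert (by
        simp only [Finset.mem_insert, Finset.mem_singleton, not_or]
        exact ⟨hne23, hne24⟩),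
      Finset.sum_insert (by simp only [Finset.mem_singleton]; exact hne34),
      Finset.sum_singleton]
  ring

lemma card_tail (n : ℕ) (hn : 7 ≤ n) (i0 i1 i2 i3 i4 : Fin n)
    (h0 : (i0 : ℕ) = 0) (h1 : (i1 : ℕ) = 1) (h2 : (i2 : ℕ) = 2)
    (h3 : (i3 : ℕ) = 3) (h4 : (i4 : ℕ) = 4) :
    (Finset.univ.filter (fun i : Fin n => ¬ (i : ℕ) < 5)).card = n - 5 := by
  have hne01 : i0 ≠ i1 := by simp [Fin.ext_iff, h0, h1]
  have hne02 : i0 ≠ i2 := by simp [Fin.ext_iff, h0, h2]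
  have hne03 : i0 ≠ i3 := by simp [Fin.ext_iff, h0, h3]
  have hne04 : i0 ≠ i4 := by simp [Fin.ext_iff, h0, h4]
  have hne12 : i1 ≠ i2 := by simp [Fin.ext_iff, h1, h2]
  have hne13 : i1 ≠ i3 := by simp [Fin.ext_iff, h1, h3]
  have hne14 : i1 ≠ i4 := by simp [Fin.ext_iff, h1, h4]
  have hne23 : i2 ≠ i3 := by simp [Fin.ext_iff, h2, h3]
  have hne24 : i2 ≠ i4 := by simp [Fin.ext_iff, h2, h4]
  have hne34 : i3 ≠ i4 := by simp [Fin.ext_iff, h3, h4]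
  have hfilter : Finset.univ.filter (fun i : Fin n => (i : ℕ) < 5)
      = ({i0, i1, i2, i3, i4} : Finset (Fin n)) := by
    ext i
    simp only [Finset.mem_filter, Finset.mem_univ, true_and, Finset.mem_insert,
      Finset.mem_singleton, Fin.ext_iff, h0, h1, h2, h3, h4]
    omega
  have hc5 : (Finset.univ.filter (fun i : Fin n => (i : ℕ) < 5)).card = 5 := by
    rw [hfilter]
    rw [Finset.card_insert_of_notMem (by
          simp only [Finset.mem_insert, Finset.mem_singleton, not_or]
          exact ⟨hne01, hne02, hne03, hne04⟩),
        Finset.card_insert_of_notMem (by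
          simp only [Finset.mem_insert, Finset.mem_singleton, not_or]
          exact ⟨hne12, hne13, hne14⟩),
        Finset.card_insert_of_notMem (by
          simp only [Finset.mem_insert, Finset.mem_singleton, not_or]
          exact ⟨hne23, hne24⟩),
        Finset.card_insert_of_notMem (by simp only [Finset.mem_singleton]; exact hne34),
        Finset.card_singleton]
  have := Finset.card_filter_add_card_filter_not
    (s := (Finset.univ : Finset (Fin n))) (p := fun i : Fin n => (i : ℕ) < 5)
  rw [Finset.card_univ, Fintype.card_fin] at this
  omega

set_option maxHeartbeats 1000000 in
lemma key_ineq (x a b c d e P q : ℝ) (hx : 7 ≤ x) (hq : 0 ≤ q)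
    (hP : P ^ 2 ≤ (x - 5) * q) (hpos : 0 < a^2 + b^2 + c^2 + d^2 + e^2 + q) :
    (a + c + e + P) ^ 2 - (a^2 + c^2 + e^2 + q)
      + 2 * (-(a*b) + a*d + b*c + b*d + c*d + d*e)
      < (x - 2) * (a^2 + b^2 + c^2 + d^2 + e^2 + q) := by
  have hm : (0:ℝ) ≤ x - 5 := by linarith
  have hm5 : (0:ℝ) < x - 5 := by linarith
  have hm7 : (0:ℝ) ≤ x - 7 := by linarith
  have hm1 : (0:ℝ) ≤ x - 1 := by linarith
  by_cases h : a = 0 ∧ b = 0 ∧ c = 0 ∧ d = 0 ∧ e = 0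
  · obtain ⟨rfl, rfl, rfl, rfl, rfl⟩ := h
    nlinarith [hP, hpos, sq_nonneg P]
  · have hs5 : 0 < a^2 + b^2 + c^2 + d^2 + e^2 := by
      have h' : a ≠ 0 ∨ b ≠ 0 ∨ c ≠ 0 ∨ d ≠ 0 ∨ e ≠ 0 := by tauto
      rcases h' with h'|h'|h'|h'|h' <;>
        nlinarith [sq_nonneg a, sq_nonneg b, sq_nonneg c, sq_nonneg d, sq_nonneg e,
          sq_pos_of_ne_zero h']
    have hPq : 0 ≤ (x - 5) * q - P ^ 2 := by linarith
    have big : 0 < 4 * (x - 5) *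
        ((x - 2) * (a^2 + b^2 + c^2 + d^2 + e^2 + q)
          - ((a + c + e + P) ^ 2 - (a^2 + c^2 + e^2 + q)
            + 2 * (-(a*b) + a*d + b*c + b*d + c*d + d*e))) := by
      linarith [mul_nonneg hm1 hPq,
        sq_nonneg (4*P - (x-5)*(a+c+e)),
        mul_nonneg hm (sq_nonneg (a+b-d)),
        mul_nonneg hm (sq_nonneg (7*b-2*c)),
        mul_nonneg hm (sq_nonneg (5*c-7*d)),
        mul_nonneg hm (sq_nonneg (21*d-10*e)),
        mul_nonneg hm (sq_nonneg e),
        mul_nonneg (mul_nonneg hm hm7) (sq_nonneg a),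
        mul_nonneg (mul_nonneg hm hm7) (sq_nonneg b),
        mul_nonneg (mul_nonneg hm hm7) (sq_nonneg c),
        mul_nonneg (mul_nonneg hm hm7) (sq_nonneg d),
        mul_nonneg (mul_nonneg hm hm7) (sq_nonneg e),
        mul_nonneg (mul_nonneg hm hm1) (sq_nonneg (a-c)),
        mul_nonneg (mul_nonneg hm hm1) (sq_nonneg (a-e)),
        mul_nonneg (mul_nonneg hm hm1) (sq_nonneg (c-e)),
        mul_pos hm5 hs5]
    by_contra hG
    push_neg at hG
    have h2 : 0 ≤ 4*(x-5) *
        (((a + c + e + P) ^ 2 - (a^2 + c^2 + e^2 + q)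
          + 2 * (-(a*b) + a*d + b*c + b*d + c*d + d*e))
          - (x - 2) * (a^2 + b^2 + c^2 + d^2 + e^2 + q)) :=
      mul_nonneg (by linarith) (by linarith)
    nlinarith [big, h2]

lemma AW_dot_lt (n : ℕ) (hn : 7 ≤ n) (v : Fin n → ℝ) (hv : v ≠ 0) :
    v ⬝ᵥ (AW n).mulVec v < ((n : ℝ) - 2) * (v ⬝ᵥ v) := by
  have l0 : 0 < n := by omega
  have l1 : 1 < n := by omega
  have l2 : 2 < n := by omega
  have l3 : 3 < n := by omega
  have l4 : 4 < n := by omega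
  set i0 : Fin n := ⟨0, l0⟩ with hi0
  set i1 : Fin n := ⟨1, l1⟩ with hi1
  set i2 : Fin n := ⟨2, l2⟩ with hi2
  set i3 : Fin n := ⟨3, l3⟩ with hi3
  set i4 : Fin n := ⟨4, l4⟩ with hi4
  have h0 : (i0 : ℕ) = 0 := rfl
  have h1 : (i1 : ℕ) = 1 := rfl
  have h2 : (i2 : ℕ) = 2 := rfl
  have h3 : (i3 : ℕ) = 3 := rfl
  have h4 : (i4 : ℕ) = 4 := rfl
  set T : Finset (Fin n) := Finset.univ.filter (fun i : Fin n => ¬ (i : ℕ) < 5) with hT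
  set P : ℝ := ∑ i ∈ T, v i with hP
  set q : ℝ := ∑ i ∈ T, v i ^ 2 with hq
  have htail : ∀ i ∈ T, ¬ ((i : ℕ) < 5) := by
    intro i hi
    rw [hT, Finset.mem_filter] at hi
    exact hi.2
  -- the sum of w
  have hW : (∑ i : Fin n, (if (i : ℕ) = 1 ∨ (i : ℕ) = 3 then 0 else v i))
      = v i0 + v i2 + v i4 + P := by
    rw [sum_five n _ i0 i1 i2 i3 i4 h0 h1 h2 h3 h4]
    have ht : (∑ i ∈ T, (if (i : ℕ) = 1 ∨ (i : ℕ) = 3 then (0:ℝ) else v i)) = P := by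
      refine Finset.sum_congr rfl fun i hi => ?_
      have := htail i hi
      rw [if_neg (by omega)]
    rw [ht]
    simp only [h0, h1, h2, h3, h4]
    norm_num
  have hW2 : (∑ i : Fin n, (if (i : ℕ) = 1 ∨ (i : ℕ) = 3 then 0 else v i)
        * (if (i : ℕ) = 1 ∨ (i : ℕ) = 3 then 0 else v i))
      = v i0 * v i0 + v i2 * v i2 + v i4 * v i4 + q := by
    rw [sum_five n _ i0 i1 i2 i3 i4 h0 h1 h2 h3 h4]
    have ht : (∑ i ∈ T, (if (i : ℕ) = 1 ∨ (i : ℕ) = 3 then (0:ℝ) else v i)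
        * (if (i : ℕ) = 1 ∨ (i : ℕ) = 3 then (0:ℝ) else v i)) = q := by
      refine Finset.sum_congr rfl fun i hi => ?_
      have := htail i hi
      rw [if_neg (by omega)]
      exact (pow_two _).symm
    rw [ht]
    simp only [h0, h1, h2, h3, h4]
    norm_num
  have hvv : v ⬝ᵥ v = v i0 ^ 2 + v i1 ^ 2 + v i2 ^ 2 + v i3 ^ 2 + v i4 ^ 2 + q := by
    have : v ⬝ᵥ v = ∑ i : Fin n, v i ^ 2 := by
      simp only [dotProduct]
      exact Finset.sum_congr rfl fun i _ => (pow_two _).symm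
    rw [this, sum_five n _ i0 i1 i2 i3 i4 h0 h1 h2 h3 h4]
  have hq0 : 0 ≤ q := Finset.sum_nonneg fun i _ => sq_nonneg _
  have hpos : 0 < v i0 ^ 2 + v i1 ^ 2 + v i2 ^ 2 + v i3 ^ 2 + v i4 ^ 2 + q := by
    have hex : ∃ i, v i ≠ 0 := by
      by_contra hc
      push_neg at hc
      exact hv (funext hc)
    obtain ⟨i, hi⟩ := hex
    have : 0 < v ⬝ᵥ v := by
      have hsum : v ⬝ᵥ v = ∑ i : Fin n, v i ^ 2 := by
        simp only [dotProduct]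
        exact Finset.sum_congr rfl fun i _ => (pow_two _).symm
      rw [hsum]
      exact Finset.sum_pos' (fun j _ => sq_nonneg _)
        ⟨i, Finset.mem_univ i, sq_pos_of_ne_zero hi⟩
    linarith [hvv ▸ this]
  have hcard : (T.card : ℝ) = (n : ℝ) - 5 := by
    rw [hT, card_tail n hn i0 i1 i2 i3 i4 h0 h1 h2 h3 h4]
    have : (5:ℕ) ≤ n := by omega
    push_cast [Nat.cast_sub this]
    ring
  have hCS : P ^ 2 ≤ ((n : ℝ) - 5) * q := by
    have := sq_sum_le_card_mul_sum_sq (s := T) (f := v)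
    rw [hP, hq, ← hcard]
    exact_mod_cast this
  have hkey := key_ineq ((n : ℝ)) (v i0) (v i1) (v i2) (v i3) (v i4) P q
    (by exact_mod_cast Nat.cast_le.mpr hn) hq0 hCS hpos
  have hQ := AW_quad n v i0 i1 i2 i3 i4 h0 h1 h2 h3 h4
  rw [hQ, hW, hW2, hvv]
  nlinarith [hkey]

theorem lam1_AW_lt (n : ℕ) (hn : 7 ≤ n) : lam1 (AW n) < (n : ℝ) - 2 := by
  have hb : ∀ μ ∈ {μ : ℝ | ∃ v : Fin n → ℝ, v ≠ 0 ∧ (AW n).mulVec v = μ • v},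
      μ < (n : ℝ) - 2 := by
    rintro μ ⟨v, hv0, hveq⟩
    have hdot : v ⬝ᵥ (AW n).mulVec v = μ * (v ⬝ᵥ v) := by
      rw [hveq, dotProduct_smul, smul_eq_mul]
    have hvvpos : 0 < v ⬝ᵥ v := by
      have hex : ∃ i, v i ≠ 0 := by
        by_contra hc
        push_neg at hc
        exact hv0 (funext hc)
      obtain ⟨i, hi⟩ := hex
      have hsum : v ⬝ᵥ v = ∑ i : Fin n, v i ^ 2 := by
        simp only [dotProduct]
        exact Finset.sum_congr rfl fun i _ => (pow_two _).symm
      rw [hsum]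
      exact Finset.sum_pos' (fun j _ => sq_nonneg _)
        ⟨i, Finset.mem_univ i, sq_pos_of_ne_zero hi⟩
    have hlt := AW_dot_lt n hn v hv0
    rw [hdot] at hlt
    exact lt_of_mul_lt_mul_right (by linarith) (le_of_lt hvvpos)
  have hfin : Set.Finite {μ : ℝ | ∃ v : Fin n → ℝ, v ≠ 0 ∧ (AW n).mulVec v = μ • v} := by
    apply Set.Finite.subset (Module.End.finite_hasEigenvalue ((AW n).mulVecLin))
    rintro μ ⟨v, hv0, hv⟩
    exact Module.End.hasEigenvalue_of_hasEigenvector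
      ⟨Module.End.mem_eigenspace_iff.2 (by simpa [Matrix.mulVecLin_apply] using hv), hv0⟩
  rcases Set.eq_empty_or_nonempty
      {μ : ℝ | ∃ v : Fin n → ℝ, v ≠ 0 ∧ (AW n).mulVec v = μ • v} with h|h
  · rw [lam1, h, Real.sSup_empty]
    have : (7:ℝ) ≤ (n:ℝ) := by exact_mod_cast hn
    linarith
  · have hmem := Set.Nonempty.csSup_mem h hfin
    exact hb _ hmem
end

section
/- For every natural number n ≥ 7, every real root λ of the polynomial λ⁵ + (5 − n)λ⁴ + (1 − 2n)λ³ + (5n − 31)λ² + (7n − 25)λ + 33 − 5n satisfies λ < n − 2. -/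
theorem quintic_root_lt (n : ℕ) (hn : 7 ≤ n) (lam : ℝ)
    (h : lam ^ 5 + (5 - (n : ℝ)) * lam ^ 4 + (1 - 2 * (n : ℝ)) * lam ^ 3
          + (5 * (n : ℝ) - 31) * lam ^ 2 + (7 * (n : ℝ) - 25) * lam
          + 33 - 5 * (n : ℝ) = 0) :
    lam < (n : ℝ) - 2 := by
  by_contra hc
  push_neg at hc
  have hn' : (7 : ℝ) ≤ (n : ℝ) := by exact_mod_cast hn
  have h5 : (5 : ℝ) ≤ lam := by linarith
  nlinarith [pow_pos (by linarith : (0:ℝ) < lam) 3, sq_nonneg lam, sq_nonneg (lam - (n:ℝ) + 2), mul_nonneg (by linarith : (0:ℝ) ≤ lam - (n:ℝ) + 2) (by nlinarith : (0:ℝ) ≤ lam^4), mul_nonneg (by linarith : (0:ℝ) ≤ lam - (n:ℝ) + 2) (by nlinarith : (0:ℝ) ≤ lam^3), mul_nonneg (by linarith : (0:ℝ) ≤ lam - (n:ℝ) + 2) (by nlinarith : (0:ℝ) ≤ lam^2), sq_nonneg (lam-5), sq_nonneg (lam^2 - 5*lam)]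
end

section
/- Let A be the adjacency matrix of a signed graph of order n ≥ 2 such that the underlying graph (with i adjacent to j iff A i j ≠ 0) is connected, A is unbalanced, and A contains no negative triangle, i.e. there are no pairwise distinct i, j, k with A i j * A j k * A k i = −1. Then the spectral radius ρ(A) satisfies ρ(A) ≤ (√(n² − 8) + n − 4)/2. -/
open Matrix

/-- Spectral radius: the maximum of |λ| over real eigenvalues λ of `A`. -/
noncomputable def specRad {n : ℕ} (A : Matrix (Fin n) (Fin n) ℝ) : ℝ :=
  sSup {r : ℝ | ∃ μ : ℝ, ∃ v : Fin n → ℝ, v ≠ 0 ∧ A.mulVec v = μ • v ∧ r = |μ|}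


private lemma pm_mul {a b : ℝ} (ha : a = -1 ∨ a = 1) (hb : b = -1 ∨ b = 1) :
    a * b = -1 ∨ a * b = 1 := by rcases ha with h|h <;> rcases hb with g|g <;> simp [h, g]

private lemma pm_sq {a : ℝ} (ha : a = -1 ∨ a = 1) : a * a = 1 := by
  rcases ha with h|h <;> simp [h]

private lemma quadBound (n : ℕ) (hn : 4 ≤ n) (r : ℝ)
    (hr : r^2 ≤ ((n:ℝ)-4)*r + (2*(n:ℝ)-6)) :
    r ≤ (Real.sqrt ((n:ℝ)^2-8) + n - 4)/2 := by
  have hn' : (4:ℝ) ≤ n := by exact_mod_cast hn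
  have h8 : (0:ℝ) ≤ (n:ℝ)^2 - 8 := by nlinarith
  have hs := Real.sq_sqrt h8
  have hs0 := Real.sqrt_nonneg ((n:ℝ)^2-8)
  nlinarith [sq_nonneg (2*r - ((n:ℝ)-4) - Real.sqrt ((n:ℝ)^2-8)),
    sq_nonneg (2*r - ((n:ℝ)-4) + Real.sqrt ((n:ℝ)^2-8))]

private lemma balanced_two (A : Matrix (Fin 2) (Fin 2) ℝ)
    (hsym : ∀ i j, A j i = A i j) (hdiag : ∀ i, A i i = 0)
    (hent : ∀ i j, A i j = -1 ∨ A i j = 0 ∨ A i j = 1) :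
    IsBalanced A := by
  refine ⟨fun i => if i = 0 then 1 else (if A 0 1 = 0 then 1 else A 0 1), ?_, ?_⟩
  · intro i
    by_cases h : i = 0
    · simp [h]
    · simp only [h, if_false]
      split_ifs with h2
      · right; rfl
      · rcases hent 0 1 with h3|h3|h3
        · left; exact h3
        · exact absurd h3 h2
        · right; exact h3
  · intro i j
    fin_cases i <;> fin_cases j <;>
      simp [hdiag, hsym 0 1]
    · split_ifs with h
      · simp [h]
      · exact mul_self_nonneg _
    · split_ifs with h
      · simp [h]
      · exact mul_self_nonneg _

private lemma balanced_three (A : Matrix (Fin 3) (Fin 3) ℝ)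
    (hsym : ∀ i j : Fin 3, A j i = A i j) (hdiag : ∀ i, A i i = 0)
    (hent : ∀ i j, A i j = -1 ∨ A i j = 0 ∨ A i j = 1)
    (htri : ∀ i j k : Fin 3, i ≠ j → j ≠ k → i ≠ k → A i j * A j k * A k i ≠ -1) :
    IsBalanced A := by
  have pm0 : ∀ (i j : Fin 3), A i j ≠ 0 → (A i j = -1 ∨ A i j = 1) := by
    intro i j h; rcases hent i j with h1|h1|h1
    · exact Or.inl h1
    · exact absurd h1 h
    · exact Or.inr h1
  set s1 : ℝ := if h : A 0 1 ≠ 0 then A 0 1 else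
    if A 1 2 ≠ 0 then (if A 0 2 ≠ 0 then A 0 2 else 1) * A 1 2 else 1 with hs1
  set s2 : ℝ := if A 0 2 ≠ 0 then A 0 2 else if A 1 2 ≠ 0 then s1 * A 1 2 else 1 with hs2
  have hs1pm : s1 = -1 ∨ s1 = 1 := by
    rw [hs1]; split_ifs with h1 h2 h3
    · exact pm0 0 1 h1
    · exact pm_mul (pm0 0 2 h3) (pm0 1 2 h2)
    · rw [one_mul]; exact pm0 1 2 h2
    · right; rfl
  have hs2pm : s2 = -1 ∨ s2 = 1 := by
    rw [hs2]; split_ifs with h1 h2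
    · exact pm0 0 2 h1
    · exact pm_mul hs1pm (pm0 1 2 h2)
    · right; rfl
  refine ⟨fun i => if i = 0 then 1 else if i = 1 then s1 else s2, ?_, ?_⟩
  · intro i
    by_cases h : i = 0
    · simp [h]
    · by_cases h' : i = 1 <;> simp [h, h', hs1pm, hs2pm]
  · have key12 : 0 ≤ s1 * A 1 2 * s2 := by
      by_cases h3 : A 1 2 = 0
      · simp [h3]
      rw [hs2]
      by_cases h2 : A 0 2 ≠ 0
      · rw [if_pos h2]
        by_cases h1 : A 0 1 ≠ 0
        · rw [hs1, dif_pos h1]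
          have ht := htri 0 1 2 (by decide) (by decide) (by decide)
          rw [hsym 0 2] at ht
          have : A 0 1 * A 1 2 * A 0 2 = -1 ∨ A 0 1 * A 1 2 * A 0 2 = 1 :=
            pm_mul (pm_mul (pm0 0 1 h1) (pm0 1 2 h3)) (pm0 0 2 h2)
          rcases this with h|h
          · exact absurd h ht
          · rw [h]; norm_num
        · rw [hs1, dif_neg h1, if_pos h3, if_pos h2]
          nlinarith [sq_nonneg (A 0 2 * A 1 2)]
      · rw [if_neg h2, if_pos h3]
        nlinarith [sq_nonneg (s1 * A 1 2)]
    intro i j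
    fin_cases i <;> fin_cases j <;> simp [hdiag]
    · -- (0,1)
      rw [hs1]; split_ifs with h1 <;>
        first
          | exact mul_self_nonneg _
          | (rw [not_not] at h1; simp [h1])
    · -- (0,2)
      rw [hs2]; split_ifs with h1 <;>
        first
          | exact mul_self_nonneg _
          | (rw [not_not] at h1; simp [h1])
    · -- (1,0)
      rw [hsym 0 1, hs1]; split_ifs with h1 <;>
        first
          | exact mul_self_nonneg _
          | (rw [not_not] at h1; simp [h1])
    · -- (1,2)
      exact key12
    · -- (2,0)
      rw [hsym 0 2, hs2]; split_ifs with h1 <;>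
        first
          | exact mul_self_nonneg _
          | (rw [not_not] at h1; simp [h1])
    · -- (2,1)
      rw [hsym 1 2]
      have e : s2 * A 1 2 * s1 = s1 * A 1 2 * s2 := by ring
      rw [e]; exact key12

set_option maxHeartbeats 1000000 in
theorem specRad_le_of_unbalanced_C3_free (n : ℕ) (hn : 2 ≤ n)
    (A : Matrix (Fin n) (Fin n) ℝ) (hA : IsSignedAdj A)
    (hconn : (SimpleGraph.fromRel (fun i j => A i j ≠ 0)).Connected)
    (hunb : ¬ IsBalanced A)
    (htri : ¬ ∃ i j k : Fin n, i ≠ j ∧ j ≠ k ∧ i ≠ k ∧ A i j * A j k * A k i = -1) :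
    specRad A ≤ (Real.sqrt ((n : ℝ) ^ 2 - 8) + (n : ℝ) - 4) / 2 := by
  obtain ⟨hsymm, hdiag, hent⟩ := hA
  have hsym : ∀ i j, A j i = A i j := fun i j => hsymm.apply i j
  have htri' : ∀ i j k : Fin n, i ≠ j → j ≠ k → i ≠ k → A i j * A j k * A k i ≠ -1 :=
    fun i j k h1 h2 h3 h => htri ⟨i, j, k, h1, h2, h3, h⟩
  rcases lt_or_ge n 4 with hlt | hn4
  · exfalso
    interval_cases n
    · exact hunb (balanced_two A hsym hdiag hent)
    · exact hunb (balanced_three A hsym hdiag hent htri')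
  · have hnr : (4:ℝ) ≤ (n:ℝ) := by exact_mod_cast hn4
    refine Real.sSup_le ?_ (by linarith [Real.sqrt_nonneg ((n:ℝ)^2 - 8)])
    rintro r ⟨μ, x, hx0, hxe, rfl⟩
    have hunb' : ¬ ∃ s : Fin n → ℝ, (∀ i, s i = -1 ∨ s i = 1) ∧
        ∀ i j, 0 ≤ s i * A i j * s j := hunb
    have hnr : (4:ℝ) ≤ (n:ℝ) := by exact_mod_cast hn4
    have pm0 : ∀ (i j : Fin n), A i j ≠ 0 → (A i j = -1 ∨ A i j = 1) := by
      intro i j h; rcases hent i j with h1|h1|h1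
      · exact Or.inl h1
      · exact absurd h1 h
      · exact Or.inr h1
    have habs1 : ∀ (i j : Fin n), |A i j| ≤ 1 := by
      intro i j; rcases hent i j with h|h|h <;> rw [h] <;> norm_num
    have heq : ∀ i, ∑ j, A i j * x j = μ * x i := by
      intro i
      simpa [Matrix.mulVec, dotProduct] using congrFun hxe i
    refine quadBound n hn4 _ ?_
    -- max coordinate
    obtain ⟨u, -, hu⟩ := Finset.exists_max_image Finset.univ (fun i => |x i|)
      ⟨⟨0, by omega⟩, Finset.mem_univ _⟩
    have hu : ∀ i, |x i| ≤ |x u| := fun i => hu i (Finset.mem_univ i)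
    have hxu : x u ≠ 0 := by
      intro h0
      apply hx0
      funext i
      have := hu i
      rw [h0, abs_zero] at this
      simpa using le_antisymm this (abs_nonneg _)
    -- u is not dominating
    have hdom : ∃ v, v ≠ u ∧ A u v = 0 := by
      by_contra hc
      push_neg at hc
      apply hunb
      refine ⟨fun i => if i = u then 1 else A u i, ?_, ?_⟩
      · intro i
        by_cases h : i = u
        · simp [h]
        · simp only [h, if_false]
          exact pm0 u i (hc i h)
      · intro i j
        dsimp only
        by_cases hij : i = j
        · rw [hij, hdiag j]
          simp
        by_cases hiu : i = u
        · have hju : ¬ j = u := fun h => hij (by rw [hiu, h])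
          rw [if_pos hiu, if_neg hju, one_mul, hiu]
          exact mul_self_nonneg _
        by_cases hju : j = u
        · rw [if_pos hju, if_neg hiu, mul_one, hju, hsym u i]
          exact mul_self_nonneg _
        · rw [if_neg hiu, if_neg hju]
          by_cases hz : A i j = 0
          · simp [hz]
          · have ht := htri' i j u hij hju hiu
            rw [hsym u j] at ht
            have hp : A i j * A u j * A u i = -1 ∨ A i j * A u j * A u i = 1 :=
              pm_mul (pm_mul (pm0 i j hz) (pm0 u j (hc j hju))) (pm0 u i (hc i hiu))
            have e : A u i * A i j * A u j = A i j * A u j * A u i := by ring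
            rw [e]
            rcases hp with h|h
            · exact absurd h ht
            · rw [h]; norm_num
    -- small eigenvalue case
    by_cases hsmall : |μ| ≤ (n:ℝ) - 3
    · nlinarith [abs_nonneg μ]
    push_neg at hsmall
    obtain ⟨v, hvu, hAuv⟩ := hdom
    -- u is adjacent to everything except v
    have huniq : ∀ w, w ≠ u → w ≠ v → A u w ≠ 0 := by
      by_contra hc
      push_neg at hc
      obtain ⟨w, hwu, hwv, hAuw⟩ := hc
      have hsub : ({u, v, w} : Finset (Fin n)) ⊆ Finset.univ := Finset.subset_univ _
      have hcard3 : ({u, v, w} : Finset (Fin n)).card = 3 := by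
        rw [Finset.card_insert_of_notMem (by simp [hvu.symm, hwu.symm]),
          Finset.card_insert_of_notMem (by simp [hwv.symm]), Finset.card_singleton]
      have hcardT : (Finset.univ \ ({u, v, w} : Finset (Fin n))).card = n - 3 := by
        rw [Finset.card_sdiff_of_subset hsub, Finset.card_univ, Fintype.card_fin, hcard3]
      have h1 : μ * x u = ∑ j ∈ Finset.univ \ ({u, v, w} : Finset (Fin n)), A u j * x j := by
        rw [← heq u]
        symm
        apply Finset.sum_subset (Finset.sdiff_subset)
        intro j _ hj
        simp only [Finset.mem_sdiff, Finset.mem_univ, true_and, not_not,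
          Finset.mem_insert, Finset.mem_singleton] at hj
        rcases hj with h|h|h
        · subst h; rw [hdiag, zero_mul]
        · subst h; rw [hAuv, zero_mul]
        · subst h; rw [hAuw, zero_mul]
      have h2 : |μ| * |x u| ≤ ((n:ℝ) - 3) * |x u| := by
        calc |μ| * |x u| = |μ * x u| := (abs_mul _ _).symm
          _ = |∑ j ∈ Finset.univ \ ({u, v, w} : Finset (Fin n)), A u j * x j| := by rw [h1]
          _ ≤ ∑ j ∈ Finset.univ \ ({u, v, w} : Finset (Fin n)), |A u j * x j| :=
              Finset.abs_sum_le_sum_abs _ _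
          _ ≤ ∑ _j ∈ Finset.univ \ ({u, v, w} : Finset (Fin n)), |x u| := by
              apply Finset.sum_le_sum
              intro j _
              rw [abs_mul]
              calc |A u j| * |x j| ≤ 1 * |x u| :=
                    mul_le_mul (habs1 u j) (hu j) (abs_nonneg _) zero_le_one
                _ = |x u| := one_mul _
          _ = ((n:ℝ) - 3) * |x u| := by
              rw [Finset.sum_const, hcardT, nsmul_eq_mul, Nat.cast_sub (by omega)]
              norm_num
      have hxupos : 0 < |x u| := abs_pos.mpr hxu
      exact absurd (le_of_mul_le_mul_right h2 hxupos) (not_le.mpr hsmall)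
    -- switching
    set s : Fin n → ℝ := fun i => if A u i = 0 then 1 else A u i with hs_def
    have hspm : ∀ i, s i = -1 ∨ s i = 1 := by
      intro i
      rw [hs_def]
      dsimp only
      split_ifs with h
      · right; rfl
      · exact pm0 u i h
    have hs2 : ∀ i, s i * s i = 1 := fun i => pm_sq (hspm i)
    have hsu : s u = 1 := by rw [hs_def]; simp [hdiag u]
    set B : Fin n → Fin n → ℝ := fun i j => s i * A i j * s j with hB_def
    set y : Fin n → ℝ := fun i => s i * x i / x u with hy_def
    have hyu : y u = 1 := by
      rw [hy_def]; dsimp only; rw [hsu, one_mul, div_self hxu]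
    have hyb : ∀ i, |y i| ≤ 1 := by
      intro i
      rw [hy_def]; dsimp only
      rw [abs_div, abs_mul]
      rcases hspm i with h|h <;> rw [h] <;> simp only [abs_neg, abs_one, one_mul] <;>
        exact div_le_one_of_le₀ (hu i) (abs_nonneg _)
    have hBeq : ∀ i, ∑ j, B i j * y j = μ * y i := by
      intro i
      have hterm : ∀ j, B i j * y j = (s i / x u) * (A i j * x j) := by
        intro j
        rw [hB_def, hy_def]; dsimp only
        field_simp
        linear_combination (s i * A i j * x j) * hs2 j
      rw [Finset.sum_congr rfl (fun j _ => hterm j), ← Finset.mul_sum, heq i]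
      rw [hy_def]; dsimp only
      field_simp
    have hBsym : ∀ i j, B i j = B j i := by
      intro i j; rw [hB_def]; dsimp only; rw [hsym i j]; ring
    have hBdiag : ∀ i, B i i = 0 := by
      intro i; rw [hB_def]; dsimp only; rw [hdiag]; ring
    have hBuv : B u v = 0 := by
      rw [hB_def]; dsimp only; rw [hAuv]; ring
    have hBuj : ∀ j, j ≠ u → j ≠ v → B u j = 1 := by
      intro j h1 h2
      have hAuj := huniq j h1 h2
      rw [hB_def]; dsimp only
      rw [hsu, one_mul, hs_def]; dsimp only
      rw [if_neg hAuj]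
      exact pm_sq (pm0 u j hAuj)
    have hBrange : ∀ i j, B i j = -1 ∨ B i j = 0 ∨ B i j = 1 := by
      intro i j
      by_cases hz : A i j = 0
      · right; left; rw [hB_def]; dsimp only; rw [hz]; ring
      · rcases pm_mul (pm_mul (hspm i) (pm0 i j hz)) (hspm j) with h|h
        · left; rw [hB_def]; dsimp only; exact h
        · right; right; rw [hB_def]; dsimp only; exact h
    have hB01 : ∀ j k, j ≠ u → k ≠ u → j ≠ v → k ≠ v → j ≠ k → B j k = 0 ∨ B j k = 1 := by
      intro j k hju hku hjv hkv hjk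
      have hsj : s j = A u j := by rw [hs_def]; dsimp only; rw [if_neg (huniq j hju hjv)]
      have hsk : s k = A u k := by rw [hs_def]; dsimp only; rw [if_neg (huniq k hku hkv)]
      by_cases hz : A j k = 0
      · left; rw [hB_def]; dsimp only; rw [hz]; ring
      · right
        have ht := htri' j k u hjk hku hju
        rw [hsym u k] at ht
        have hp : A j k * A u k * A u j = -1 ∨ A j k * A u k * A u j = 1 :=
          pm_mul (pm_mul (pm0 j k hz) (pm0 u k (huniq k hku hkv))) (pm0 u j (huniq j hju hjv))
        rcases hp with h|h
        · exact absurd h ht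
        · rw [hB_def]; dsimp only; rw [hsj, hsk, ← h]; ring
    have hBnonneg : ∀ i j, i ≠ v → j ≠ v → 0 ≤ B i j := by
      intro i j hiv hjv
      by_cases hij : i = j
      · rw [hij, hBdiag]
      by_cases hiu : i = u
      · rw [hiu, hBuj j (fun h => hij (by rw [hiu, h])) hjv]; norm_num
      by_cases hju : j = u
      · rw [hju, hBsym, hBuj i (fun h => hij (by rw [hju, h])) hiv]; norm_num
      · rcases hB01 i j hiu hju hiv hjv hij with h|h <;> rw [h] <;> norm_num
    have hBbal : ∀ t : Fin n → ℝ, (∀ i, t i = -1 ∨ t i = 1) →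
        (∀ i j, 0 ≤ t i * B i j * t j) → False := by
      intro t ht h
      apply hunb
      refine ⟨fun i => t i * s i, fun i => pm_mul (ht i) (hspm i), ?_⟩
      intro i j
      have h2 : (t i * s i) * A i j * (t j * s j) = t i * B i j * t j := by
        rw [hB_def]; dsimp only; ring
      dsimp only
      rw [h2]
      exact h i j
    -- the two special neighbors of v
    have hwp : ∃ w, B v w = 1 := by
      by_contra hc
      push_neg at hc
      apply hBbal (fun i => if i = v then -1 else 1)
        (fun i => by by_cases h : i = v <;> simp [h])
      intro i j
      show 0 ≤ (if i = v then (-1:ℝ) else 1) * B i j * (if j = v then (-1:ℝ) else 1)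
      by_cases hiv : i = v <;> by_cases hjv : j = v
      · rw [hiv, hjv, if_pos rfl, hBdiag]; simp
      · rw [hiv, if_pos rfl, if_neg hjv, mul_one]
        rcases hBrange v j with h|h|h
        · rw [h]; norm_num
        · rw [h]; norm_num
        · exact absurd h (hc j)
      · rw [hjv, if_pos rfl, if_neg hiv, one_mul, hBsym]
        rcases hBrange v i with h|h|h
        · rw [h]; norm_num
        · rw [h]; norm_num
        · exact absurd h (hc i)
      · rw [if_neg hiv, if_neg hjv, one_mul, mul_one]
        exact hBnonneg i j hiv hjv
    have hwm : ∃ w, B v w = -1 := by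
      by_contra hc
      push_neg at hc
      apply hBbal (fun _ => 1) (fun _ => Or.inr rfl)
      intro i j
      show 0 ≤ (1:ℝ) * B i j * 1
      rw [one_mul, mul_one]
      by_cases hiv : i = v
      · rw [hiv]
        rcases hBrange v j with h|h|h
        · exact absurd h (hc j)
        · rw [h]
        · rw [h]; norm_num
      by_cases hjv : j = v
      · rw [hjv, hBsym]
        rcases hBrange v i with h|h|h
        · exact absurd h (hc i)
        · rw [h]
        · rw [h]; norm_num
      · exact hBnonneg i j hiv hjv
    obtain ⟨wp, hwp⟩ := hwp
    obtain ⟨wm, hwm⟩ := hwm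
    have hBvu : B v u = 0 := by rw [hBsym]; exact hBuv
    have hBvv : B v v = 0 := hBdiag v
    have hwpu : wp ≠ u := fun h => by rw [h, hBvu] at hwp; norm_num at hwp
    have hwpv : wp ≠ v := fun h => by rw [h, hBvv] at hwp; norm_num at hwp
    have hwmu : wm ≠ u := fun h => by rw [h, hBvu] at hwm; norm_num at hwm
    have hwmv : wm ≠ v := fun h => by rw [h, hBvv] at hwm; norm_num at hwm
    have hpmne : wp ≠ wm := fun h => by rw [h, hwm] at hwp; norm_num at hwp
    have hBpm : B wp wm = 0 := by
      rcases hB01 wp wm hwpu hwmu hwpv hwmv hpmne with h|h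
      · exact h
      · exfalso
        have ht := htri' v wp wm hwpv.symm hpmne hwmv.symm
        apply ht
        have e : B v wp * B wp wm * B wm v =
            (A v wp * A wp wm * A wm v) * ((s v * s v) * (s wp * s wp) * (s wm * s wm)) := by
          rw [hB_def]; dsimp only; ring
        have e2 : B v wp * B wp wm * B wm v = A v wp * A wp wm * A wm v := by
          rw [e, hs2, hs2, hs2]; ring
        rw [← e2, hwp, h, hBsym wm v, hwm]
        try norm_num
    -- the sum set
    set S : Finset (Fin n) := Finset.univ \ {u, v} with hS_def
    have hSmem : ∀ j, j ∈ S ↔ j ≠ u ∧ j ≠ v := by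
      intro j
      rw [hS_def]
      simp [Finset.mem_sdiff]
    have hScard : S.card = n - 2 := by
      rw [hS_def, Finset.card_sdiff_of_subset (Finset.subset_univ _), Finset.card_univ, Fintype.card_fin]
      have h2 : ({u, v} : Finset (Fin n)).card = 2 := by
        rw [Finset.card_insert_of_notMem (by simp [hvu.symm]), Finset.card_singleton]
      rw [h2]
    have hwpS : wp ∈ S := (hSmem wp).mpr ⟨hwpu, hwpv⟩
    have hwmS : wm ∈ S := (hSmem wm).mpr ⟨hwmu, hwmv⟩
    have hsum_u : ∑ j ∈ S, y j = μ := by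
      have h0 : ∑ j, B u j * y j = μ := by rw [hBeq u, hyu, mul_one]
      calc ∑ j ∈ S, y j = ∑ j ∈ S, B u j * y j := by
            apply Finset.sum_congr rfl
            intro j hj
            rw [hBuj j ((hSmem j).mp hj).1 ((hSmem j).mp hj).2, one_mul]
        _ = ∑ j, B u j * y j := by
            apply Finset.sum_subset (Finset.subset_univ S)
            intro j _ hj
            rw [hSmem] at hj
            push_neg at hj
            by_cases h : j = u
            · subst h; rw [hBdiag, zero_mul]
            · rw [hj h, hBuv, zero_mul]
        _ = μ := h0
    have hkey : ∀ j ∈ S, |μ - y j| ≤ (n:ℝ) - 3 := by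
      intro j hj
      have h1 : ∑ k ∈ S.erase j, y k + y j = ∑ k ∈ S, y k := Finset.sum_erase_add S y hj
      have hce : (S.erase j).card = n - 3 := by
        rw [Finset.card_erase_of_mem hj, hScard]
        omega
      have h2 : |∑ k ∈ S.erase j, y k| ≤ (n:ℝ) - 3 := by
        calc |∑ k ∈ S.erase j, y k| ≤ ∑ k ∈ S.erase j, |y k| := Finset.abs_sum_le_sum_abs _ _
          _ ≤ (S.erase j).card • (1:ℝ) := Finset.sum_le_card_nsmul _ _ _ (fun k _ => hyb k)
          _ = (n:ℝ) - 3 := by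
              rw [hce, nsmul_eq_mul, mul_one, Nat.cast_sub (by omega)]
              norm_num
      have h3 : μ - y j = ∑ k ∈ S.erase j, y k := by rw [hsum_u] at h1; linarith
      rw [h3]; exact h2
    have hU : (Finset.univ : Finset (Fin n)) = insert u (insert v S) := by
      ext j
      simp only [Finset.mem_univ, true_iff, Finset.mem_insert, hSmem]
      by_cases h1 : j = u
      · left; exact h1
      · by_cases h2 : j = v
        · right; left; exact h2
        · right; right; exact ⟨h1, h2⟩
    have huS : u ∉ insert v S := by
      simp only [Finset.mem_insert, hSmem]
      push_neg
      exact ⟨hvu.symm, fun h => absurd rfl h⟩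
    have hvS : v ∉ S := by
      simp only [hSmem]
      push_neg
      exact fun _ => rfl
    have hw_eq : ∀ w ∈ S, 1 + B v w * y v + (∑ j ∈ S, B w j * y j) = μ * y w := by
      intro w hw
      have h0 := hBeq w
      rw [hU, Finset.sum_insert huS, Finset.sum_insert hvS] at h0
      have e1 : B w u = 1 := by
        rw [hBsym]; exact hBuj w ((hSmem w).mp hw).1 ((hSmem w).mp hw).2
      have e2 : B w v = B v w := hBsym w v
      rw [e1, hyu, mul_one, e2] at h0
      linarith
    -- splitting the sum over S
    have hwm_es : wm ∈ S.erase wp := Finset.mem_erase.mpr ⟨Ne.symm hpmne, hwmS⟩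
    have hsplit : ∑ j ∈ S, y j = y wp + y wm + ∑ j ∈ (S.erase wp).erase wm, y j := by
      rw [← Finset.sum_erase_add S y hwpS, ← Finset.sum_erase_add (S.erase wp) y hwm_es]
      ring
    have hcard4 : ((S.erase wp).erase wm).card = n - 4 := by
      rw [Finset.card_erase_of_mem hwm_es, Finset.card_erase_of_mem hwpS, hScard]
      omega
    rcases le_or_gt 0 μ with hpos | hneg
    · -- positive case
      have habsμ : |μ| = μ := abs_of_nonneg hpos
      rw [habsμ] at hsmall ⊢
      have hylb : ∀ j ∈ S, μ - ((n:ℝ)-3) ≤ y j := by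
        intro j hj
        have := hkey j hj
        rw [abs_le] at this
        linarith [this.1]
      have hypos : ∀ j ∈ S, 0 < y j := by
        intro j hj
        have := hylb j hj
        linarith
      have hyub : ∀ j, y j ≤ 1 := fun j => le_trans (le_abs_self _) (hyb j)
      have hBub : μ ≤ (n:ℝ) - 4 + y wp + y wm := by
        have hrest : ∑ j ∈ (S.erase wp).erase wm, y j ≤ (n:ℝ) - 4 := by
          calc ∑ j ∈ (S.erase wp).erase wm, y j
              ≤ ((S.erase wp).erase wm).card • (1:ℝ) :=
                Finset.sum_le_card_nsmul _ _ _ (fun k _ => hyub k)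
            _ = (n:ℝ) - 4 := by
                rw [hcard4, nsmul_eq_mul, mul_one, Nat.cast_sub (by omega)]
                norm_num
        have := hsplit
        rw [hsum_u] at this
        linarith
      have hIneq : ∀ w w', w ∈ S → w' ∈ S → w ≠ w' → B w w' = 0 →
          ∑ j ∈ S, B w j * y j ≤ μ - y w - y w' := by
        intro w w' hw hw' hww' hBz
        have hterm : ∀ j ∈ S, B w j * y j ≤ (if j = w ∨ j = w' then 0 else y j) := by
          intro j hj
          by_cases h1 : j = w
          · subst h1; rw [hBdiag, zero_mul, if_pos (Or.inl rfl)]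
          by_cases h2 : j = w'
          · subst h2; rw [hBz, zero_mul, if_pos (Or.inr rfl)]
          · rw [if_neg (by tauto)]
            rcases hB01 w j ((hSmem w).mp hw).1 ((hSmem j).mp hj).1
                ((hSmem w).mp hw).2 ((hSmem j).mp hj).2 (Ne.symm h1) with h|h
            · rw [h, zero_mul]; exact le_of_lt (hypos j hj)
            · rw [h, one_mul]
        calc ∑ j ∈ S, B w j * y j ≤ ∑ j ∈ S, (if j = w ∨ j = w' then 0 else y j) :=
              Finset.sum_le_sum hterm
          _ = μ - y w - y w' := by
              have hfun : ∀ j ∈ S, (if j = w ∨ j = w' then 0 else y j) =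
                  y j - (if j = w then y j else 0) - (if j = w' then y j else 0) := by
                intro j _
                by_cases h1 : j = w
                · subst h1
                  rw [if_pos (Or.inl rfl), if_pos rfl, if_neg hww']
                  ring
                by_cases h2 : j = w'
                · subst h2
                  rw [if_pos (Or.inr rfl), if_neg h1, if_pos rfl]
                  ring
                · rw [if_neg (by tauto), if_neg h1, if_neg h2]
                  ring
              rw [Finset.sum_congr rfl hfun, Finset.sum_sub_distrib, Finset.sum_sub_distrib,
                Finset.sum_ite_eq' S w y, Finset.sum_ite_eq' S w' y, if_pos hw, if_pos hw',
                hsum_u]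
      have hI1 : μ * y wp ≤ 1 + y v + (μ - y wp - y wm) := by
        have h0 := hw_eq wp hwpS
        have h1 := hIneq wp wm hwpS hwmS hpmne hBpm
        rw [hwp, one_mul] at h0
        linarith
      have hI2 : μ * y wm ≤ 1 - y v + (μ - y wm - y wp) := by
        have h0 := hw_eq wm hwmS
        have h1 := hIneq wm wp hwmS hwpS (Ne.symm hpmne) (by rw [hBsym]; exact hBpm)
        rw [hwm, neg_one_mul] at h0
        linarith
      have hfac : 0 ≤ (μ + 2) * ((y wp + y wm) - (μ - ((n:ℝ)-4))) :=
        mul_nonneg (by linarith) (by linarith)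
      nlinarith [hI1, hI2, hfac]
    · -- negative case
      have habsμ : |μ| = -μ := abs_of_neg hneg
      rw [habsμ] at hsmall ⊢
      have hyub : ∀ j ∈ S, y j ≤ μ + ((n:ℝ)-3) := by
        intro j hj
        have := hkey j hj
        rw [abs_le] at this
        linarith [this.2]
      have hyneg : ∀ j ∈ S, y j < 0 := by
        intro j hj
        have := hyub j hj
        linarith
      have hylb1 : ∀ j, -1 ≤ y j := by
        intro j
        have := hyb j
        rw [abs_le] at this
        exact this.1
      have hBlb : y wp + y wm - ((n:ℝ) - 4) ≤ μ := by
        have hrest : -((n:ℝ) - 4) ≤ ∑ j ∈ (S.erase wp).erase wm, y j := by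
          have := Finset.card_nsmul_le_sum ((S.erase wp).erase wm) y (-1)
            (fun k _ => hylb1 k)
          rw [hcard4, nsmul_eq_mul, Nat.cast_sub (by omega)] at this
          push_cast at this
          linarith
        have := hsplit
        rw [hsum_u] at this
        linarith
      have hT : ∀ w ∈ S, ∑ j ∈ S, B w j * y j ≤ 0 := by
        intro w hw
        apply Finset.sum_nonpos
        intro j hj
        by_cases h1 : j = w
        · subst h1; rw [hBdiag, zero_mul]
        · rcases hB01 w j ((hSmem w).mp hw).1 ((hSmem j).mp hj).1
              ((hSmem w).mp hw).2 ((hSmem j).mp hj).2 (Ne.symm h1) with h|h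
          · rw [h, zero_mul]
          · rw [h, one_mul]; exact le_of_lt (hyneg j hj)
      have hI1 : μ * y wp ≤ 1 + y v := by
        have h0 := hw_eq wp hwpS
        have h1 := hT wp hwpS
        rw [hwp, one_mul] at h0
        linarith
      have hI2 : μ * y wm ≤ 1 - y v := by
        have h0 := hw_eq wm hwmS
        have h1 := hT wm hwmS
        rw [hwm, neg_one_mul] at h0
        linarith
      have hfac : μ * (μ + ((n:ℝ)-4)) ≤ μ * (y wp + y wm) :=
        mul_le_mul_of_nonpos_left (by linarith) (le_of_lt hneg)
      nlinarith [hI1, hI2, hfac]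
end

section
/- Let A be the adjacency matrix of a signed graph of order n, let X = (x₁,…,xₙ) be an eigenvector of A for the eigenvalue λ₁(A), and let r ≠ s be vertices with x_r * x_s ≥ 0 and not both x_r and x_s zero. Suppose A r s ∈ {−1, 0}, and let B be the matrix agreeing with A in all entries except B r s = B s r = c, where c ∈ {0, 1} and c > A r s. Then λ₁(B) > λ₁(A). -/
open Matrix

/-!
By the Rayleigh principle `yᵀ B y ≤ λ₁(B) ‖y‖²` for every `y`, and
`yᵀ B y = yᵀ A y + 2 (c - A_rs) y_r y_s`. Say `x_r ≠ 0` and let `λ` be the eigenvalue of `x`.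
For `y = x + t e_s` the eigenvector equation gives
`yᵀ B y - λ ‖y‖² = (A_ss - λ) t² + 2 (c - A_rs) x_r t + 2 (c - A_rs) x_r x_s`,
whose constant term is nonnegative and whose linear coefficient is nonzero; a suitable `t`
makes it positive, so `λ₁(B) > λ`.
-/

section Lam1

variable {n : ℕ} {M : Matrix (Fin n) (Fin n) ℝ}

lemma le_lam1_of_mulVec_eq_smul {μ : ℝ} {v : Fin n → ℝ} (hv : v ≠ 0) (h : M *ᵥ v = μ • v) :
    μ ≤ lam1 M := by
  refine le_csSup (M.finite_real_spectrum.bddAbove.mono ?_) ⟨v, hv, h⟩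
  rintro ν ⟨w, hw, hν⟩
  rw [← Matrix.spectrum_toLin']
  exact Module.End.HasEigenvalue.mem_spectrum
    (Module.End.hasEigenvalue_of_hasEigenvector ⟨Module.End.mem_eigenspace_iff.mpr hν, hw⟩)

lemma posSemidef_lam1_smul_one_sub (hM : M.IsSymm) :
    (lam1 M • (1 : Matrix (Fin n) (Fin n) ℝ) - M).PosSemidef := by
  have hH : (lam1 M • (1 : Matrix (Fin n) (Fin n) ℝ) - M).IsHermitian := by
    simpa [Matrix.IsSymm, Matrix.transpose_sub, Matrix.transpose_smul] using hM
  refine hH.posSemidef_iff_eigenvalues_nonneg.mpr fun i => ?_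
  set v := (hH.eigenvectorBasis i).ofLp
  set ν := hH.eigenvalues i
  have hv : v ≠ 0 := (WithLp.ofLp_eq_zero 2).not.mpr (hH.eigenvectorBasis.orthonormal.ne_zero i)
  have hMv : M *ᵥ v = (lam1 M - ν) • v := by
    rw [sub_smul, ← hH.mulVec_eigenvectorBasis i, Matrix.sub_mulVec, Matrix.smul_mulVec,
      Matrix.one_mulVec, sub_sub_cancel]
  simpa using le_lam1_of_mulVec_eq_smul hv hMv

lemma dotProduct_mulVec_le_lam1_mul (hM : M.IsSymm) (v : Fin n → ℝ) :
    v ⬝ᵥ M *ᵥ v ≤ lam1 M * (v ⬝ᵥ v) := by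
  have := (posSemidef_lam1_smul_one_sub hM).dotProduct_mulVec_nonneg v
  simp only [star_trivial, Matrix.sub_mulVec, Matrix.smul_mulVec, Matrix.one_mulVec,
    dotProduct_sub, dotProduct_smul, smul_eq_mul] at this
  linarith

lemma lt_lam1_of_mul_lt_dotProduct_mulVec (hM : M.IsSymm) {μ : ℝ} {v : Fin n → ℝ}
    (h : μ * (v ⬝ᵥ v) < v ⬝ᵥ M *ᵥ v) : μ < lam1 M :=
  lt_of_mul_lt_mul_right (h.trans_le (dotProduct_mulVec_le_lam1_mul hM v))
    (dotProduct_self_star_nonneg v)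

end Lam1

section SetEdge

variable {ι R : Type*} [DecidableEq ι]

def setEdge (A : Matrix ι ι R) (r s : ι) (c : R) : Matrix ι ι R :=
  Matrix.of fun i j => if (i = r ∧ j = s) ∨ (i = s ∧ j = r) then c else A i j

variable {A : Matrix ι ι R} {r s : ι}

lemma setEdge_comm (c : R) : setEdge A r s c = setEdge A s r c := by
  ext i j
  simp only [setEdge, Matrix.of_apply, or_comm]

lemma setEdge_isSymm (hA : A.IsSymm) (c : R) : (setEdge A r s c).IsSymm := by
  ext i j
  simp only [setEdge, Matrix.transpose_apply, Matrix.of_apply, hA.apply]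
  congr 1
  apply propext
  tauto

variable [CommRing R]

lemma setEdge_eq_add (hA : A.IsSymm) (hrs : r ≠ s) (c : R) :
    setEdge A r s c = A + (c - A r s) • (Matrix.single r s 1 + Matrix.single s r 1) := by
  ext i j
  rcases em (i = r ∧ j = s) with ⟨rfl, rfl⟩ | hr
  · simp [setEdge, hrs]
  rcases em (i = s ∧ j = r) with ⟨rfl, rfl⟩ | hs
  · simp [setEdge, hrs, hA.apply]
  have hr' : ¬(r = i ∧ s = j) := fun h => hr ⟨h.1.symm, h.2.symm⟩
  have hs' : ¬(s = i ∧ r = j) := fun h => hs ⟨h.1.symm, h.2.symm⟩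
  simp [setEdge, hr, hs, hr', hs']

lemma dotProduct_mulVec_setEdge [Fintype ι] (hA : A.IsSymm) (hrs : r ≠ s) (c : R) (y : ι → R) :
    y ⬝ᵥ setEdge A r s c *ᵥ y = y ⬝ᵥ A *ᵥ y + 2 * (c - A r s) * (y r * y s) := by
  simp only [setEdge_eq_add hA hrs, Matrix.add_mulVec, Matrix.smul_mulVec, dotProduct_add,
    dotProduct_smul, Matrix.single_mulVec_eq, dotProduct_single, smul_eq_mul]
  ring

end SetEdge

lemma exists_pos_mul_sq_add_mul {𝕜 : Type*} [Field 𝕜] [LinearOrder 𝕜] [IsStrictOrderedRing 𝕜]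
    (a : 𝕜) {b : 𝕜} (hb : b ≠ 0) : ∃ t : 𝕜, 0 < a * t ^ 2 + b * t := by
  refine ⟨b / (|a| + 1), ?_⟩
  have hden : 0 < |a| + 1 := by positivity
  have hpos : 0 < b ^ 2 * (a + |a| + 1) := mul_pos (sq_pos_of_ne_zero hb) (by linarith [neg_abs_le a])
  field_simp
  linarith

lemma dotProduct_mulVec_add_sub_of_mulVec_eq {ι R : Type*} [Fintype ι] [CommRing R]
    {A : Matrix ι ι R} (hA : A.IsSymm) {x : ι → R} {μ : R} (hx : A *ᵥ x = μ • x) (w : ι → R) :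
    (x + w) ⬝ᵥ A *ᵥ (x + w) - μ * ((x + w) ⬝ᵥ (x + w)) = w ⬝ᵥ A *ᵥ w - μ * (w ⬝ᵥ w) := by
  have hwx : w ⬝ᵥ A *ᵥ x = x ⬝ᵥ A *ᵥ w := by
    rw [Matrix.dotProduct_mulVec, ← Matrix.mulVec_transpose, hA.eq, dotProduct_comm]
  simp only [Matrix.mulVec_add, dotProduct_add, add_dotProduct, ← hwx, hx, dotProduct_smul,
    smul_eq_mul, dotProduct_comm x w]
  ring

lemma lt_lam1_setEdge {n : ℕ} {A : Matrix (Fin n) (Fin n) ℝ} (hA : A.IsSymm) {x : Fin n → ℝ}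
    {μ : ℝ} (hev : A *ᵥ x = μ • x) {r s : Fin n} (hrs : r ≠ s) (hsign : 0 ≤ x r * x s)
    (hnz : x r ≠ 0 ∨ x s ≠ 0) {c : ℝ} (hlt : A r s < c) : μ < lam1 (setEdge A r s c) := by
  wlog hr : x r ≠ 0 generalizing r s
  · rw [setEdge_comm]
    refine this hrs.symm (by linarith [mul_comm (x r) (x s)]) hnz.symm ?_ (hnz.resolve_left hr)
    rwa [hA.apply r s]
  obtain ⟨t, ht⟩ := exists_pos_mul_sq_add_mul (A s s - μ)
    (mul_ne_zero (mul_ne_zero two_ne_zero (sub_pos.mpr hlt).ne') hr)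
  set w : Fin n → ℝ := t • Pi.single s 1
  refine lt_lam1_of_mul_lt_dotProduct_mulVec (setEdge_isSymm hA c) (v := x + w) ?_
  have hquad := dotProduct_mulVec_setEdge hA hrs c (x + w)
  have hpert := dotProduct_mulVec_add_sub_of_mulVec_eq hA hev w
  have hw : w ⬝ᵥ A *ᵥ w - μ * (w ⬝ᵥ w) = (A s s - μ) * t ^ 2 := by
    simp only [w, Matrix.mulVec_smul, dotProduct_smul, smul_dotProduct, Matrix.mulVec_single_one,
      single_dotProduct, Matrix.col_apply, Pi.single_eq_same, smul_eq_mul, one_mul, mul_one]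
    ring
  have hy : (x + w) r * (x + w) s = x r * x s + x r * t := by
    simp only [w, Pi.add_apply, Pi.smul_apply, Pi.single_eq_of_ne hrs, Pi.single_eq_same,
      smul_eq_mul, mul_zero, add_zero, mul_one]
    ring
  have hconst := mul_nonneg (sub_pos.mpr hlt).le hsign
  rw [hquad, hy]
  linear_combination ht + 2 * hconst - hpert - hw

theorem lam1_lt_of_edge_improvement_general (n : ℕ) (A : Matrix (Fin n) (Fin n) ℝ)
    (hA : IsSignedAdj A) (x : Fin n → ℝ)
    (hev : A.mulVec x = lam1 A • x)
    (r s : Fin n) (hrs : r ≠ s) (hsign : x r * x s ≥ 0)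
    (hnz : ¬ (x r = 0 ∧ x s = 0)) (c : ℝ) (hlt : A r s < c) :
    lam1 A <
      lam1 (Matrix.of fun i j =>
        if (i = r ∧ j = s) ∨ (i = s ∧ j = r) then c else A i j) :=
  lt_lam1_setEdge hA.1 hev hrs hsign (not_and_or.mp hnz) hlt

theorem lam1_lt_of_edge_improvement (n : ℕ) (A : Matrix (Fin n) (Fin n) ℝ)
    (hA : IsSignedAdj A) (x : Fin n → ℝ) (hx : x ≠ 0)
    (hev : A.mulVec x = lam1 A • x)
    (r s : Fin n) (hrs : r ≠ s) (hsign : x r * x s ≥ 0)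
    (hnz : ¬ (x r = 0 ∧ x s = 0))
    (hArs : A r s = -1 ∨ A r s = 0) (c : ℝ) (hc : c = 0 ∨ c = 1) (hlt : A r s < c) :
    lam1 A <
      lam1 (Matrix.of fun i j =>
        if (i = r ∧ j = s) ∨ (i = s ∧ j = r) then c else A i j) :=
  lam1_lt_of_edge_improvement_general n A hA x hev r s hrs hsign hnz c hlt
end

section
/- Let A be the adjacency matrix of a signed graph of order n, let X = (x₁,…,xₙ) be an eigenvector of A for the eigenvalue λ₁(A), and let r, s, w be pairwise distinct vertices with x_r ≥ x_s, A s w = 1, A r w = 0, and x_w > 0. Let B be the matrix agreeing with A in all entries except B s w = B w s = 0 and B r w = B w r = 1. Then λ₁(B) > λ₁(A). -/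
open Matrix

/-! If `x` is a `λ₁(A)`-eigenvector, then `xᵀBx = xᵀAx + 2 x_w (x_r - x_s) ≥ λ₁(A) ‖x‖²`, so
`λ₁(B) ≥ λ₁(A)` by the Rayleigh principle, which follows from `A ≤ λ₁(A) • 1` in the Loewner
order. Equality would make `x` a maximiser of the Rayleigh quotient of `B`, hence a
`λ₁(A)`-eigenvector of `B`; but row `r` of `Bx` exceeds that of `Ax` by `x_w > 0`. -/

open scoped MatrixOrder

theorem Matrix.setOf_exists_mulVec_eq_smul_eq_spectrum {ι K : Type*} [Fintype ι] [DecidableEq ι]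
    [Field K] (A : Matrix ι ι K) :
    {μ : K | ∃ v : ι → K, v ≠ 0 ∧ A *ᵥ v = μ • v} = spectrum K A := by
  ext μ
  rw [← spectrum_toLin', ← Module.End.hasEigenvalue_iff_mem_spectrum]
  constructor
  · rintro ⟨v, hv, hAv⟩
    exact Module.End.hasEigenvalue_of_hasEigenvector
      (Module.End.hasEigenvector_iff.2 ⟨by simpa using hAv, hv⟩)
  · intro hμ
    obtain ⟨v, hv⟩ := hμ.exists_hasEigenvector
    exact ⟨v, hv.2, by simpa using Module.End.mem_eigenspace_iff.1 hv.1⟩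

theorem lam1_eq_sSup_spectrum {n : ℕ} (A : Matrix (Fin n) (Fin n) ℝ) :
    lam1 A = sSup (spectrum ℝ A) := by
  rw [lam1, A.setOf_exists_mulVec_eq_smul_eq_spectrum]

namespace Matrix.IsHermitian

variable {n : ℕ} {A : Matrix (Fin n) (Fin n) ℝ}

theorem le_lam1_smul_one (hA : A.IsHermitian) : A ≤ lam1 A • 1 := by
  rw [← Algebra.algebraMap_eq_smul_one, lam1_eq_sSup_spectrum]
  exact le_algebraMap_of_spectrum_le fun μ hμ => le_csSup A.finite_real_spectrum.bddAbove hμ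

theorem dotProduct_mulVec_le_lam1_mul (hA : A.IsHermitian) (v : Fin n → ℝ) :
    v ⬝ᵥ A *ᵥ v ≤ lam1 A * (v ⬝ᵥ v) := by
  have := (Matrix.le_iff.1 hA.le_lam1_smul_one).dotProduct_mulVec_nonneg v
  simp only [star_trivial, sub_mulVec, smul_mulVec, one_mulVec, dotProduct_sub,
    dotProduct_smul, smul_eq_mul] at this
  linarith

theorem mulVec_eq_lam1_smul_of_dotProduct_mulVec_eq (hA : A.IsHermitian) {v : Fin n → ℝ}
    (hv : v ⬝ᵥ A *ᵥ v = lam1 A * (v ⬝ᵥ v)) : A *ᵥ v = lam1 A • v := by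
  have := ((Matrix.le_iff.1 hA.le_lam1_smul_one).dotProduct_mulVec_zero_iff v).1 (by
    simp only [star_trivial, sub_mulVec, smul_mulVec, one_mulVec, dotProduct_sub,
      dotProduct_smul, smul_eq_mul, hv, sub_self])
  rwa [sub_mulVec, smul_mulVec, one_mulVec, sub_eq_zero, eq_comm] at this

theorem lt_lam1_of_mul_le_dotProduct_mulVec (hA : A.IsHermitian) {c : ℝ} {v : Fin n → ℝ}
    (hv : v ≠ 0) (hle : c * (v ⬝ᵥ v) ≤ v ⬝ᵥ A *ᵥ v) (hne : A *ᵥ v ≠ c • v) : c < lam1 A := by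
  have hvv : 0 < v ⬝ᵥ v := by simpa using dotProduct_star_self_pos_iff.2 hv
  have hray := hA.dotProduct_mulVec_le_lam1_mul v
  have hc : c ≤ lam1 A := le_of_mul_le_mul_right (hle.trans hray) hvv
  refine hc.lt_of_ne fun hc => hne ?_
  subst hc
  exact hA.mulVec_eq_lam1_smul_of_dotProduct_mulVec_eq (le_antisymm hray hle)

end Matrix.IsHermitian

section EdgeRotation

variable {ι R : Type*} [DecidableEq ι]

def rotateEdge [Zero R] [One R] (A : Matrix ι ι R) (s r w : ι) : Matrix ι ι R :=
  of fun i j =>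
    if (i = s ∧ j = w) ∨ (i = w ∧ j = s) then 0
    else if (i = r ∧ j = w) ∨ (i = w ∧ j = r) then 1
    else A i j

theorem isSymm_rotateEdge [Zero R] [One R] {A : Matrix ι ι R} (hA : A.IsSymm) (s r w : ι) :
    (rotateEdge A s r w).IsSymm := by
  ext i j
  simp only [rotateEdge, transpose_apply, of_apply, hA.apply i j]
  grind

variable [CommRing R] {A : Matrix ι ι R} {s r w : ι}

theorem rotateEdge_eq_add [Nontrivial R] (hA : A.IsSymm) (hsw : A s w = 1) (hrw : A r w = 0)
    (hr : r ≠ w) (hs : s ≠ w) :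
    rotateEdge A s r w =
      A + (single r w 1 + single w r 1 - single s w 1 - single w s 1) := by
  have hws : A w s = 1 := hA.apply s w ▸ hsw
  have hwr : A w r = 0 := hA.apply r w ▸ hrw
  have hrs : r ≠ s := by rintro rfl; simp_all
  ext i j
  simp only [rotateEdge, of_apply, Matrix.add_apply, Matrix.sub_apply, single_apply]
  grind

variable [Fintype ι] [Nontrivial R]

theorem dotProduct_rotateEdge_mulVec (hA : A.IsSymm) (hsw : A s w = 1) (hrw : A r w = 0)
    (hr : r ≠ w) (hs : s ≠ w) (x : ι → R) :
    x ⬝ᵥ rotateEdge A s r w *ᵥ x = x ⬝ᵥ A *ᵥ x + 2 * x w * (x r - x s) := by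
  simp only [rotateEdge_eq_add hA hsw hrw hr hs, add_mulVec, sub_mulVec, single_mulVec_eq,
    dotProduct_add, dotProduct_sub, dotProduct_smul, dotProduct_single, smul_eq_mul]
  ring

theorem rotateEdge_mulVec_apply_left (hA : A.IsSymm) (hsw : A s w = 1) (hrw : A r w = 0)
    (hr : r ≠ w) (hs : s ≠ w) (x : ι → R) :
    (rotateEdge A s r w *ᵥ x) r = (A *ᵥ x) r + x w := by
  have hrs : r ≠ s := by rintro rfl; simp_all
  simp [rotateEdge_eq_add hA hsw hrw hr hs, add_mulVec, sub_mulVec, single_mulVec, hr, hrs]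

end EdgeRotation

theorem lam1_lt_of_edge_rotation_general (n : ℕ) (A : Matrix (Fin n) (Fin n) ℝ)
    (hA : IsSignedAdj A) (x : Fin n → ℝ) (hx : x ≠ 0)
    (hev : A.mulVec x = lam1 A • x)
    (r s w : Fin n) (hrw : r ≠ w) (hsw : s ≠ w)
    (hx_rs : x s ≤ x r) (hAsw : A s w = 1) (hArw : A r w = 0) (hxw : 0 < x w) :
    lam1 A <
      lam1 (Matrix.of fun i j =>
        if (i = s ∧ j = w) ∨ (i = w ∧ j = s) then 0
        else if (i = r ∧ j = w) ∨ (i = w ∧ j = r) then 1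
        else A i j) := by
  change lam1 A < lam1 (rotateEdge A s r w)
  have hB : (rotateEdge A s r w).IsHermitian :=
    isHermitian_iff_isSymm.2 (isSymm_rotateEdge hA.1 s r w)
  refine hB.lt_lam1_of_mul_le_dotProduct_mulVec hx ?_ fun hBx => ?_
  · rw [dotProduct_rotateEdge_mulVec hA.1 hAsw hArw hrw hsw, hev, dotProduct_smul, smul_eq_mul]
    nlinarith
  · have hrow := congrFun hBx r
    rw [rotateEdge_mulVec_apply_left hA.1 hAsw hArw hrw hsw, hev] at hrow
    simp only [Pi.smul_apply, smul_eq_mul] at hrow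
    linarith

theorem lam1_lt_of_edge_rotation (n : ℕ) (A : Matrix (Fin n) (Fin n) ℝ)
    (hA : IsSignedAdj A) (x : Fin n → ℝ) (hx : x ≠ 0)
    (hev : A.mulVec x = lam1 A • x)
    (r s w : Fin n) (hrs : r ≠ s) (hrw : r ≠ w) (hsw : s ≠ w)
    (hx_rs : x s ≤ x r) (hAsw : A s w = 1) (hArw : A r w = 0) (hxw : 0 < x w) :
    lam1 A <
      lam1 (Matrix.of fun i j =>
        if (i = s ∧ j = w) ∨ (i = w ∧ j = s) then 0
        else if (i = r ∧ j = w) ∨ (i = w ∧ j = r) then 1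
        else A i j) :=
  lam1_lt_of_edge_rotation_general n A hA x hx hev r s w hrw hsw hx_rs hAsw hArw hxw
end

section
/- Let n ≥ 2, let A be the adjacency matrix of a signed graph of order n with λ₁(A) ≥ n − 2, and let X be a nonnegative eigenvector of A for the eigenvalue λ₁(A) with X ≠ 0. Then X has at most one zero coordinate: there do not exist two distinct indices i ≠ j with X i = 0 and X j = 0. -/
open Matrix

theorem nonneg_eigenvector_at_most_one_zero (n : ℕ) (hn : 2 ≤ n)
    (A : Matrix (Fin n) (Fin n) ℝ) (hA : IsSignedAdj A)
    (hlam : (n : ℝ) - 2 ≤ lam1 A)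
    (X : Fin n → ℝ) (hX0 : X ≠ 0) (hXnn : ∀ i, 0 ≤ X i)
    (hev : A.mulVec X = lam1 A • X) :
    ¬ ∃ i j : Fin n, i ≠ j ∧ X i = 0 ∧ X j = 0 := by
  rintro ⟨i, j, hij, hXi, hXj⟩
  obtain ⟨hs, hd, he⟩ := hA
  obtain ⟨i0, -, hi0⟩ := Finset.exists_max_image Finset.univ X ⟨i, Finset.mem_univ i⟩
  have hM : 0 < X i0 := by
    obtain ⟨k, hk⟩ := Function.ne_iff.mp hX0
    exact lt_of_lt_of_le (lt_of_le_of_ne (hXnn k) (Ne.symm hk)) (hi0 k (Finset.mem_univ k))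
  have hii : i0 ≠ i := fun h => by rw [h, hXi] at hM; exact lt_irrefl 0 hM
  have hij0 : i0 ≠ j := fun h => by rw [h, hXj] at hM; exact lt_irrefl 0 hM
  set lam := lam1 A with hlamdef
  have heq : lam * X i0 = ∑ k, A i0 k * X k := by
    have := congrFun hev i0
    simpa [Matrix.mulVec, dotProduct, Pi.smul_apply, smul_eq_mul] using this.symm
  set T : Finset (Fin n) := ({i0, i, j} : Finset (Fin n)) with hT
  have hcardT : T.card = 3 := by
    rw [hT, Finset.card_insert_of_notMem (by simp [hii, hij0]),
      Finset.card_insert_of_notMem (by simp [hij]), Finset.card_singleton]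
  have h3n : 3 ≤ n := by
    calc 3 = T.card := hcardT.symm
    _ ≤ Fintype.card (Fin n) := Finset.card_le_univ T
    _ = n := Fintype.card_fin n
  have hterm : ∀ k, A i0 k * X k ≤ (if k ∈ T then 0 else X i0) := by
    intro k
    by_cases hk : k ∈ T
    · rw [if_pos hk]
      rw [hT] at hk
      simp only [Finset.mem_insert, Finset.mem_singleton] at hk
      rcases hk with h | h | h
      · rw [h, hd]; simp
      · rw [h, hXi]; simp
      · rw [h, hXj]; simp
    · rw [if_neg hk]
      have h1 : A i0 k ≤ 1 := by rcases he i0 k with h | h | h <;> rw [h] <;> norm_num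
      calc A i0 k * X k ≤ 1 * X k := mul_le_mul_of_nonneg_right h1 (hXnn k)
      _ = X k := one_mul _
      _ ≤ X i0 := hi0 k (Finset.mem_univ k)
  have hsum : ∑ k, A i0 k * X k ≤ ((n : ℝ) - 3) * X i0 := by
    calc ∑ k, A i0 k * X k ≤ ∑ k, (if k ∈ T then 0 else X i0) :=
          Finset.sum_le_sum (fun k _ => hterm k)
    _ = ((Finset.univ \ T).card : ℝ) * X i0 := by
          rw [Finset.sum_ite, Finset.sum_const, Finset.sum_const, smul_zero, zero_add,
            nsmul_eq_mul]
          congr 2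
          rw [Finset.sdiff_eq_filter]
    _ = ((n : ℝ) - 3) * X i0 := by
          rw [Finset.card_sdiff_of_subset (Finset.subset_univ T), hcardT, Finset.card_univ,
            Fintype.card_fin, Nat.cast_sub h3n]
          norm_num
  have hge : ((n : ℝ) - 2) * X i0 ≤ lam * X i0 :=
    mul_le_mul_of_nonneg_right hlam hM.le
  nlinarith [hge, heq ▸ hsum, hM]
end
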